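/- arXiv:1610.04041 — 7 statements merged into one kernel-verified Lean document; each statement's English description precedes it below -/
import Mathlib

section
/- For each s ∈ (0, s̄), the point γ(s) defined by the recursion γ_n(s) = s, γ_i(s) = s/(1 - γ_{i+1}(s)) for 1 ≤ i ≤ n-1, γ_0(s) = λ_c s/(λ(1 - γ_1(s))), γ_{n+1}(s) = (Gλ_c/ν)s is an equilibrium of the transcription flow model f_1, i.e., f_1(γ(s)) = 0. -/
/-!
The recursion is chosen so that along `γ(s)` all the fluxes of the model coincide: the
initiation flux `λ R (1 - x₁)`, the hopping fluxes `λ_c xᵢ (1 - xᵢ₊₁)` and the exit flux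
`λ_c xₙ` all equal `λ_c s`. Every component of `f₁` is a difference of two consecutive
fluxes (scaled by `G` for `R`), except `Ṁ`, whose decay term is balanced by the choice of
`γ_{n+1}`.
-/

section Flux

variable {n : ℕ} {s : ℝ} {γ : ℕ → ℝ}

theorem mul_one_sub_succ_eq_of_recursion
    (hγmid : ∀ i, 1 ≤ i → i ≤ n - 1 → γ i = s / (1 - γ (i + 1)))
    (hlt : ∀ i, 1 ≤ i → i ≤ n → γ i < 1) {i : ℕ} (h1 : 1 ≤ i) (h2 : i ≤ n - 1) :
    γ i * (1 - γ (i + 1)) = s := by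
  have hne : 1 - γ (i + 1) ≠ 0 := (sub_pos.2 (hlt (i + 1) (by omega) (by omega))).ne'
  rw [hγmid i h1 h2, div_mul_cancel₀ _ hne]

theorem mul_mul_one_sub_eq_of_eq_div {lam lamc a b : ℝ} (hlam : lam ≠ 0) (hb : b ≠ 1)
    (ha : a = lamc * s / (lam * (1 - b))) : lam * a * (1 - b) = lamc * s := by
  have : 1 - b ≠ 0 := sub_ne_zero.2 hb.symm
  rw [ha]
  field_simp

end Flux

theorem gamma_is_equilibrium_general
    (n : ℕ) (hn : 2 ≤ n) (G lam lamc nu : ℝ)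
    (hlam : 0 < lam) (hnu : 0 < nu)
    (s : ℝ)
    (γ : ℕ → ℝ)
    (hγn : γ n = s)
    (hγmid : ∀ i, 1 ≤ i → i ≤ n - 1 → γ i = s / (1 - γ (i + 1)))
    (hγ0 : γ 0 = lamc * s / (lam * (1 - γ 1)))
    (hγlast : γ (n + 1) = (G * lamc / nu) * s)
    (hbound : ∀ i, 1 ≤ i → i ≤ n → γ i ∈ Set.Ioo (0 : ℝ) 1) :
    -- f₁(γ(s)) = 0, componentwise:
    (-G * lam * γ 0 * (1 - γ 1) + G * lamc * γ n = 0) ∧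
    (lam * γ 0 * (1 - γ 1) - lamc * γ 1 * (1 - γ 2) = 0) ∧
    (∀ i, 2 ≤ i → i ≤ n - 1 →
      lamc * γ (i - 1) * (1 - γ i) - lamc * γ i * (1 - γ (i + 1)) = 0) ∧
    (lamc * γ (n - 1) * (1 - γ n) - lamc * γ n = 0) ∧
    (G * lamc * γ n - nu * γ (n + 1) = 0) := by
  have hlt : ∀ i, 1 ≤ i → i ≤ n → γ i < 1 := fun i h1 h2 => (hbound i h1 h2).2
  have hop := fun i (h1 : 1 ≤ i) (h2 : i ≤ n - 1) =>
    mul_one_sub_succ_eq_of_recursion hγmid hlt h1 h2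
  have entry : lam * γ 0 * (1 - γ 1) = lamc * s :=
    mul_mul_one_sub_eq_of_eq_div hlam.ne' (hlt 1 le_rfl (by omega)).ne hγ0
  have first : γ 1 * (1 - γ 2) = s := hop 1 le_rfl (by omega)
  have last : γ (n - 1) * (1 - γ n) = s := by
    simpa [Nat.sub_add_cancel (by omega : 1 ≤ n)] using hop (n - 1) (by omega) le_rfl
  refine ⟨by linear_combination -G * entry + G * lamc * hγn,
    by linear_combination entry - lamc * first, fun i h2 hi => ?_,
    by linear_combination lamc * last - lamc * hγn, ?_⟩
  · have prev := hop (i - 1) (by omega) (by omega)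
    rw [Nat.sub_add_cancel (by omega : 1 ≤ i)] at prev
    linear_combination lamc * prev - lamc * hop i (by omega) hi
  · rw [hγn, hγlast]
    field_simp
    ring

/-- The point `γ(s)` defined by the continued-fraction recursion
is an equilibrium of the transcription flow model `f₁`, i.e. every component
of the vector field vanishes at `γ(s)`. -/
theorem gamma_is_equilibrium
    (n : ℕ) (hn : 2 ≤ n) (G lam lamc nu : ℝ)
    (hG : 0 < G) (hlam : 0 < lam) (hlamc : 0 < lamc) (hnu : 0 < nu)
    (sbar s : ℝ) (hs : s ∈ Set.Ioo 0 sbar)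
    (γ : ℕ → ℝ)
    (hγn : γ n = s)
    (hγmid : ∀ i, 1 ≤ i → i ≤ n - 1 → γ i = s / (1 - γ (i + 1)))
    (hγ0 : γ 0 = lamc * s / (lam * (1 - γ 1)))
    (hγlast : γ (n + 1) = (G * lamc / nu) * s)
    (hbound : ∀ i, 1 ≤ i → i ≤ n → γ i ∈ Set.Ioo (0 : ℝ) 1) :
    -- f₁(γ(s)) = 0, componentwise:
    (-G * lam * γ 0 * (1 - γ 1) + G * lamc * γ n = 0) ∧
    (lam * γ 0 * (1 - γ 1) - lamc * γ 1 * (1 - γ 2) = 0) ∧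
    (∀ i, 2 ≤ i → i ≤ n - 1 →
      lamc * γ (i - 1) * (1 - γ i) - lamc * γ i * (1 - γ (i + 1)) = 0) ∧
    (lamc * γ (n - 1) * (1 - γ n) - lamc * γ n = 0) ∧
    (G * lamc * γ n - nu * γ (n + 1) = 0) :=
  gamma_is_equilibrium_general n hn G lam lamc nu hlam hnu s γ hγn hγmid hγ0 hγlast hbound
end

section
/- The reduced Jacobian J_{f_1}^{red} (the upper-left (n+1)×(n+1) block of the Jacobian of the transcription flow model evaluated at an interior equilibrium) admits an LU decomposition J_{f_1}^{red} = LU where L is unit lower bidiagonal with subdiagonal entries (-1/G, -1, ..., -1) and U is upper triangular with diagonal entries (-Gλ(1-γ_1), -λ_c(1-γ_2), ..., -λ_c(1-γ_n), 0). In particular, since γ_i ∈ (0,1) for all i, U has exactly n nonzero diagonal entries, so rank(J_{f_1}^{red}) = n and J_{f_1}^{red} has a one-dimensional kernel. -/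
/-- The reduced Jacobian `J_{f₁}^red`: the upper-left `(n+1)×(n+1)` block of the
Jacobian of the transcription flow model at an interior equilibrium. -/
noncomputable def reducedJacobian (n : ℕ) (G lam lamc : ℝ) (γ : ℕ → ℝ) :
    Matrix (Fin (n + 1)) (Fin (n + 1)) ℝ :=
  Matrix.of fun i j =>
    if i.val = 0 then
      if j.val = 0 then -G * lam * (1 - γ 1)
      else if j.val = 1 then G * lam * γ 0
      else if j.val = n then G * lamc else 0
    else if i.val = 1 then
      if j.val = 0 then lam * (1 - γ 1)
      else if j.val = 1 then -lamc * (1 - γ 2) - lam * γ 0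
      else if j.val = 2 then lamc * γ 1 else 0
    else if i.val = n then
      if j.val = n - 1 then lamc * (1 - γ n)
      else if j.val = n then -lamc * (1 + γ (n - 1)) else 0
    else
      if j.val = i.val - 1 then lamc * (1 - γ i.val)
      else if j.val = i.val then -lamc * (1 - γ (i.val + 1) + γ (i.val - 1))
      else if j.val = i.val + 1 then lamc * γ i.val else 0

/-- The unit lower bidiagonal factor `L` with subdiagonal `(-1/G, -1, …, -1)`. -/
noncomputable def lowerFactor (n : ℕ) (G : ℝ) : Matrix (Fin (n + 1)) (Fin (n + 1)) ℝ :=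
  Matrix.of fun i j =>
    if i = j then 1
    else if i.val = j.val + 1 then (if j.val = 0 then -1 / G else -1)
    else 0

set_option maxHeartbeats 1600000 in
/-- `J_{f₁}^red = LU` with `L` unit lower bidiagonal (subdiagonal
`(-1/G, -1, …, -1)`) and `U` upper triangular with diagonal
`(-Gλ(1-γ₁), -λ_c(1-γ₂), …, -λ_c(1-γₙ), 0)`; since `γᵢ ∈ (0,1)`, `U` has exactly
`n` nonzero diagonal entries, so `rank J_{f₁}^red = n` and the kernel of
`J_{f₁}^red` is one-dimensional. -/
theorem reducedJacobian_LU_and_rank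
    (n : ℕ) (hn : 2 ≤ n) (G lam lamc : ℝ)
    (hG : 0 < G) (hlam : 0 < lam) (hlamc : 0 < lamc)
    (γ : ℕ → ℝ) (hγ0 : 0 < γ 0)
    (hbound : ∀ i, 1 ≤ i → i ≤ n → γ i ∈ Set.Ioo (0 : ℝ) 1) :
    (∃ U : Matrix (Fin (n + 1)) (Fin (n + 1)) ℝ,
      (∀ i j : Fin (n + 1), j.val < i.val → U i j = 0) ∧
      U ⟨0, by omega⟩ ⟨0, by omega⟩ = -G * lam * (1 - γ 1) ∧
      (∀ i : Fin (n + 1), 1 ≤ i.val → i.val ≤ n - 1 →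
        U i i = -lamc * (1 - γ (i.val + 1))) ∧
      U (Fin.last n) (Fin.last n) = 0 ∧
      reducedJacobian n G lam lamc γ = lowerFactor n G * U) ∧
    (reducedJacobian n G lam lamc γ).rank = n ∧
    Module.finrank ℝ
      (LinearMap.ker (reducedJacobian n G lam lamc γ).mulVecLin) = 1 := by

  classical
  have hG' : G ≠ 0 := ne_of_gt hG
  -- the upper triangular factor
  set U : Matrix (Fin (n + 1)) (Fin (n + 1)) ℝ := Matrix.of fun i j =>
    if i.val = 0 then
      (if j.val = 0 then -G * lam * (1 - γ 1)
       else if j.val = 1 then G * lam * γ 0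
       else if j.val = n then G * lamc else 0)
    else if i.val = n then 0
    else (if j.val = i.val then -lamc * (1 - γ (i.val + 1)) else 0)
       + (if j.val = i.val + 1 then lamc * γ i.val else 0)
       + (if j.val = n then lamc else 0) with hUdef
  have hUt : ∀ i j : Fin (n + 1), j.val < i.val → U i j = 0 := by
    intro i j hji
    have hi := i.isLt
    simp only [hUdef, Matrix.of_apply]
    split_ifs <;> first | rfl | (exfalso; omega) | ring1
  have hU00 : U ⟨0, by omega⟩ ⟨0, by omega⟩ = -G * lam * (1 - γ 1) := by
    simp [hUdef]
  have hUmid : ∀ i : Fin (n + 1), 1 ≤ i.val → i.val ≤ n - 1 →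
      U i i = -lamc * (1 - γ (i.val + 1)) := by
    intro i h1 h2
    simp only [hUdef, Matrix.of_apply]
    split_ifs <;> first | (exfalso; first | omega | assumption) | ring1 | (field_simp; ring1)
  have hUnn : U (Fin.last n) (Fin.last n) = 0 := by
    simp only [hUdef, Matrix.of_apply, Fin.val_last]
    split_ifs <;> first | rfl | (exfalso; omega)
  -- the factorization
  have hLU : reducedJacobian n G lam lamc γ = lowerFactor n G * U := by
    ext i j
    rw [Matrix.mul_apply]
    have hi := i.isLt
    have hj := j.isLt
    rcases Nat.eq_zero_or_pos i.val with hi0 | hi0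
    · have hrow : ∀ k : Fin (n + 1), lowerFactor n G i k * U k j
          = if k = i then U k j else 0 := by
        intro k
        simp only [lowerFactor, Matrix.of_apply]
        rcases eq_or_ne i k with h | h
        · subst h; simp
        · rw [if_neg h, if_neg (by omega), zero_mul,
            if_neg (fun hh => h hh.symm)]
      rw [Finset.sum_congr rfl fun k _ => hrow k, Finset.sum_ite_eq' Finset.univ i
        (fun k => U k j), if_pos (Finset.mem_univ i)]
      simp only [reducedJacobian, hUdef, Matrix.of_apply, if_pos hi0]
    · -- i ≥ 1
      set i' : Fin (n + 1) := ⟨i.val - 1, by omega⟩ with hi'def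
      have hvi' : i'.val = i.val - 1 := rfl
      have hii' : i ≠ i' := by
        intro h
        have := congrArg Fin.val h
        omega
      have hrow : ∀ k : Fin (n + 1), lowerFactor n G i k * U k j
          = (if k = i then U k j else 0)
            + (if k = i' then (if i.val - 1 = 0 then -1 / G else -1) * U k j else 0) := by
        intro k
        simp only [lowerFactor, Matrix.of_apply]
        rcases eq_or_ne i k with h | h
        · subst h
          rw [if_pos rfl, if_pos rfl, if_neg hii', one_mul, add_zero]
        · rw [if_neg h, if_neg (show ¬ k = i from fun hh => h hh.symm), zero_add]
          rcases eq_or_ne k i' with hk | hk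
          · have hkv : k.val = i.val - 1 := by rw [hk]
            rw [if_pos hk, if_pos (show i.val = k.val + 1 by omega)]
            try rw [hkv]
          · rw [if_neg (show ¬ k = i' from hk),
              if_neg (show ¬ i.val = k.val + 1 from fun hh =>
                hk (Fin.ext (by omega : k.val = i'.val))), zero_mul]
      rw [Finset.sum_congr rfl fun k _ => hrow k, Finset.sum_add_distrib,
        Finset.sum_ite_eq' Finset.univ i (fun k => U k j), if_pos (Finset.mem_univ i),
        Finset.sum_ite_eq' Finset.univ i'
          (fun k => (if i.val - 1 = 0 then -1 / G else -1) * U k j),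
        if_pos (Finset.mem_univ i')]
      -- now a pure computation
      have hi'val : i'.val = i.val - 1 := rfl
      rcases Nat.lt_or_ge i.val n with hilt | hige
      · rcases Nat.eq_or_lt_of_le hi0 with h1 | h2
        · -- i.val = 1
          have h1 : i.val = 1 := h1.symm
          rw [if_pos (by omega)]
          simp only [reducedJacobian, hUdef, Matrix.of_apply, hi'val, h1]
          norm_num
          split_ifs <;> first | (exfalso; first | omega | assumption) | ring1 | (field_simp; ring1) | (exfalso; subst_vars; simp_all <;> omega)
        · -- 2 ≤ i.val ≤ n - 1
          obtain ⟨m, hm⟩ : ∃ m, i.val = m + 1 := ⟨i.val - 1, by omega⟩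
          have hm1 : 1 ≤ m := by omega
          have hmn : m + 1 < n := by omega
          rw [if_neg (by omega)]
          simp only [reducedJacobian, hUdef, Matrix.of_apply, hi'val, hm,
            Nat.add_sub_cancel]
          split_ifs <;> first | (exfalso; first | omega | assumption) | ring1 | (field_simp; ring1)
      · -- i.val = n
        have hin : i.val = n := by omega
        have hn1 : n - 1 + 1 = n := by omega
        rw [if_neg (by omega)]
        simp only [reducedJacobian, hUdef, Matrix.of_apply, hi'val, hin, hn1]
        split_ifs <;> first | (exfalso; first | omega | assumption) | ring1 | (field_simp; ring1)
  -- diagonal entries of U are nonzero below the last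
  have hdiagne : ∀ i : Fin (n + 1), i.val < n → U i i ≠ 0 := by
    intro i hilt
    rcases Nat.eq_zero_or_pos i.val with h0 | h0
    · have hie : i = ⟨0, by omega⟩ := Fin.ext h0
      rw [hie, hU00]
      have hγ1 := (hbound 1 le_rfl (by omega)).2
      have : -G * lam * (1 - γ 1) < 0 := by
        have h1 : (0:ℝ) < 1 - γ 1 := by linarith
        nlinarith [mul_pos (mul_pos hG hlam) h1]
      exact ne_of_lt this
    · rw [hUmid i h0 (by omega)]
      have hγ := (hbound (i.val + 1) (by omega) (by omega)).2
      have : -lamc * (1 - γ (i.val + 1)) < 0 := by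
        have h1 : (0:ℝ) < 1 - γ (i.val + 1) := by linarith
        nlinarith [mul_pos hlamc h1]
      exact ne_of_lt this
  -- vectors in the kernel of U vanishing at the last coordinate are zero
  have hUvec : ∀ x : Fin (n + 1) → ℝ, U.mulVec x = 0 → x (Fin.last n) = 0 → x = 0 := by
    intro x hx hlast
    have key : ∀ m : ℕ, ∀ i : Fin (n + 1), n - i.val ≤ m → x i = 0 := by
      intro m
      induction m with
      | zero =>
        intro i hi
        have hie : i = Fin.last n := Fin.ext (by simp only [Fin.val_last]; omega)
        rw [hie]; exact hlast
      | succ m ih =>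
        intro i hi
        rcases Nat.lt_or_ge i.val n with hlt | hge
        · have hrow := congrFun hx i
          simp only [Matrix.mulVec, dotProduct, Pi.zero_apply] at hrow
          have hterm : ∀ j : Fin (n + 1), U i j * x j = if j = i then U i i * x i else 0 := by
            intro j
            rcases eq_or_ne j i with rfl | hne
            · simp
            · rw [if_neg hne]
              rcases Nat.lt_or_ge j.val i.val with h | h
              · rw [hUt i j h, zero_mul]
              · have hne' : i.val ≠ j.val := fun hh => hne (Fin.ext hh.symm)
                have : x j = 0 := ih j (by omega)
                rw [this, mul_zero]
          rw [Finset.sum_congr rfl fun j _ => hterm j,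
            Finset.sum_ite_eq' Finset.univ i (fun j => U i i * x i),
            if_pos (Finset.mem_univ i)] at hrow
          rcases mul_eq_zero.1 hrow with h | h
          · exact absurd h (hdiagne i hlt)
          · exact h
        · have hie : i = Fin.last n := Fin.ext (by simp only [Fin.val_last]; omega)
          rw [hie]; exact hlast
    funext i
    exact key n i (by omega)
  -- determinant facts
  have hUbt : U.BlockTriangular id := by
    intro i j hlt
    exact hUt i j hlt
  have hdetU : U.det = 0 := by
    rw [Matrix.det_of_upperTriangular hUbt]
    exact Finset.prod_eq_zero (Finset.mem_univ (Fin.last n)) hUnn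
  have hLbt : (lowerFactor n G).BlockTriangular OrderDual.toDual := by
    intro i j hlt
    have hij : i < j := hlt
    have hij' : i.val < j.val := hij
    simp only [lowerFactor, Matrix.of_apply]
    rw [if_neg (Fin.ne_of_val_ne (by omega)), if_neg (by omega)]
  have hdetL : (lowerFactor n G).det = 1 := by
    rw [Matrix.det_of_lowerTriangular _ hLbt]
    have h1 : ∀ i : Fin (n + 1), lowerFactor n G i i = 1 := by
      intro i; simp [lowerFactor]
    simp only [h1, Finset.prod_const_one]
  have hLinj : ∀ y : Fin (n + 1) → ℝ, (lowerFactor n G).mulVec y = 0 → y = 0 := by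
    intro y hy
    by_contra hy0
    have := Matrix.exists_mulVec_eq_zero_iff.mp ⟨y, hy0, hy⟩
    rw [hdetL] at this
    exact one_ne_zero this
  -- kernels agree
  have hkerJU : LinearMap.ker (reducedJacobian n G lam lamc γ).mulVecLin
      = LinearMap.ker U.mulVecLin := by
    ext x
    simp only [LinearMap.mem_ker, Matrix.mulVecLin_apply]
    constructor
    · intro hx
      apply hLinj
      rw [Matrix.mulVec_mulVec, ← hLU]
      exact hx
    · intro hx
      rw [hLU, ← Matrix.mulVec_mulVec, hx, Matrix.mulVec_zero]
  -- the kernel of U is one-dimensional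
  have hfin : Module.finrank ℝ (LinearMap.ker U.mulVecLin) = 1 := by
    have hle : Module.finrank ℝ (LinearMap.ker U.mulVecLin) ≤ 1 := by
      have hinj : Function.Injective
          ((LinearMap.proj (Fin.last n) : (Fin (n + 1) → ℝ) →ₗ[ℝ] ℝ).comp
            (LinearMap.ker U.mulVecLin).subtype) := by
        rw [← LinearMap.ker_eq_bot, LinearMap.ker_eq_bot']
        rintro ⟨x, hxmem⟩ hx0
        have hx : U.mulVec x = 0 := by
          simpa only [LinearMap.mem_ker, Matrix.mulVecLin_apply] using hxmem
        have hxl : x (Fin.last n) = 0 := by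
          simpa using hx0
        exact Subtype.ext (hUvec x hx hxl)
      have := LinearMap.finrank_le_finrank_of_injective hinj
      simpa using this
    have hge : 0 < Module.finrank ℝ (LinearMap.ker U.mulVecLin) := by
      obtain ⟨v, hv0, hv⟩ := Matrix.exists_mulVec_eq_zero_iff.mpr hdetU
      rw [Module.finrank_pos_iff]
      rw [Submodule.nontrivial_iff_ne_bot]
      intro hbot
      apply hv0
      have hmem : v ∈ LinearMap.ker U.mulVecLin := by
        simp only [LinearMap.mem_ker, Matrix.mulVecLin_apply]; exact hv
      rw [hbot, Submodule.mem_bot] at hmem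
      exact hmem
    omega
  have hkerfin : Module.finrank ℝ
      (LinearMap.ker (reducedJacobian n G lam lamc γ).mulVecLin) = 1 := by
    rw [hkerJU]; exact hfin
  have hrank : (reducedJacobian n G lam lamc γ).rank = n := by
    have h1 := LinearMap.finrank_range_add_finrank_ker
      (reducedJacobian n G lam lamc γ).mulVecLin
    have hdom : Module.finrank ℝ (Fin (n + 1) → ℝ) = n + 1 := by
      simp [Module.finrank_fintype_fun_eq_card]
    rw [hdom, hkerfin] at h1
    rw [Matrix.rank]
    omega
  exact ⟨⟨U, hUt, hU00, hUmid, hUnn, hLU⟩, hrank, hkerfin⟩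
end

section
/- Every eigenvalue of the reduced Jacobian J_{f_1}^{red} has nonpositive real part, and zero is an eigenvalue with geometric multiplicity exactly one. -/
open Matrix


lemma sum_ite3 {m : ℕ} (a b c : Fin m) (x y z : ℝ) :
    (∑ j : Fin m, ((if j = a then x else 0) + (if j = b then y else 0)
      + (if j = c then z else 0))) = x + y + z := by
  simp [Finset.sum_add_distrib]

lemma row0 (n : ℕ) (hn : 2 ≤ n) (G lam lamc : ℝ) (γ : ℕ → ℝ) (u : Fin (n+1) → ℝ) :
    (reducedJacobian n G lam lamc γ *ᵥ u) ⟨0, by omega⟩ =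
      -G*lam*(1-γ 1) * u ⟨0, by omega⟩ + G*lam*γ 0 * u ⟨1, by omega⟩
        + G*lamc * u ⟨n, by omega⟩ := by
  have key : ∀ j : Fin (n+1),
      reducedJacobian n G lam lamc γ ⟨0, by omega⟩ j * u j =
      (if j = ⟨0, by omega⟩ then -G*lam*(1-γ 1) * u ⟨0, by omega⟩ else 0)
      + (if j = ⟨1, by omega⟩ then G*lam*γ 0 * u ⟨1, by omega⟩ else 0)
      + (if j = ⟨n, by omega⟩ then G*lamc * u ⟨n, by omega⟩ else 0) := by
    rintro ⟨jv, hj⟩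
    simp only [reducedJacobian, Matrix.of_apply, Fin.mk.injEq]
    split_ifs <;> first | omega | exact (‹False›).elim | (subst_vars; ring)
  show (∑ j, reducedJacobian n G lam lamc γ ⟨0, by omega⟩ j * u j) = _
  rw [Finset.sum_congr rfl (fun j _ => key j), sum_ite3]

lemma row1 (n : ℕ) (hn : 2 ≤ n) (G lam lamc : ℝ) (γ : ℕ → ℝ) (u : Fin (n+1) → ℝ) :
    (reducedJacobian n G lam lamc γ *ᵥ u) ⟨1, by omega⟩ =
      lam*(1-γ 1) * u ⟨0, by omega⟩ + (-lamc*(1-γ 2) - lam*γ 0) * u ⟨1, by omega⟩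
        + lamc*γ 1 * u ⟨2, by omega⟩ := by
  have key : ∀ j : Fin (n+1),
      reducedJacobian n G lam lamc γ ⟨1, by omega⟩ j * u j =
      (if j = ⟨0, by omega⟩ then lam*(1-γ 1) * u ⟨0, by omega⟩ else 0)
      + (if j = ⟨1, by omega⟩ then (-lamc*(1-γ 2) - lam*γ 0) * u ⟨1, by omega⟩ else 0)
      + (if j = ⟨2, by omega⟩ then lamc*γ 1 * u ⟨2, by omega⟩ else 0) := by
    rintro ⟨jv, hj⟩
    simp only [reducedJacobian, Matrix.of_apply, Fin.mk.injEq]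
    split_ifs <;> first | omega | exact (‹False›).elim | (subst_vars; ring)
  show (∑ j, reducedJacobian n G lam lamc γ ⟨1, by omega⟩ j * u j) = _
  rw [Finset.sum_congr rfl (fun j _ => key j), sum_ite3]

lemma rown (n : ℕ) (hn : 2 ≤ n) (G lam lamc : ℝ) (γ : ℕ → ℝ) (u : Fin (n+1) → ℝ) :
    (reducedJacobian n G lam lamc γ *ᵥ u) ⟨n, by omega⟩ =
      lamc*(1-γ n) * u ⟨n-1, by omega⟩ + (-lamc*(1+γ (n-1))) * u ⟨n, by omega⟩ + 0 := by
  have key : ∀ j : Fin (n+1),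
      reducedJacobian n G lam lamc γ ⟨n, by omega⟩ j * u j =
      (if j = ⟨n-1, by omega⟩ then lamc*(1-γ n) * u ⟨n-1, by omega⟩ else 0)
      + (if j = ⟨n, by omega⟩ then (-lamc*(1+γ (n-1))) * u ⟨n, by omega⟩ else 0)
      + (if j = ⟨n, by omega⟩ then (0:ℝ) else 0) := by
    rintro ⟨jv, hj⟩
    simp only [reducedJacobian, Matrix.of_apply, Fin.mk.injEq]
    split_ifs <;> first | omega | exact (‹False›).elim | (subst_vars; ring)
  show (∑ j, reducedJacobian n G lam lamc γ ⟨n, by omega⟩ j * u j) = _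
  rw [Finset.sum_congr rfl (fun j _ => key j), sum_ite3]

lemma rowmid (n : ℕ) (hn : 2 ≤ n) (G lam lamc : ℝ) (γ : ℕ → ℝ) (u : Fin (n+1) → ℝ)
    (i : ℕ) (h2 : 2 ≤ i) (hin : i ≤ n - 1) :
    (reducedJacobian n G lam lamc γ *ᵥ u) ⟨i, by omega⟩ =
      lamc*(1-γ i) * u ⟨i-1, by omega⟩
        + (-lamc*(1 - γ (i+1) + γ (i-1))) * u ⟨i, by omega⟩
        + lamc*γ i * u ⟨i+1, by omega⟩ := by
  have key : ∀ j : Fin (n+1),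
      reducedJacobian n G lam lamc γ ⟨i, by omega⟩ j * u j =
      (if j = ⟨i-1, by omega⟩ then lamc*(1-γ i) * u ⟨i-1, by omega⟩ else 0)
      + (if j = ⟨i, by omega⟩ then (-lamc*(1 - γ (i+1) + γ (i-1))) * u ⟨i, by omega⟩ else 0)
      + (if j = ⟨i+1, by omega⟩ then lamc*γ i * u ⟨i+1, by omega⟩ else 0) := by
    rintro ⟨jv, hj⟩
    simp only [reducedJacobian, Matrix.of_apply, Fin.mk.injEq]
    split_ifs <;> first | omega | exact (‹False›).elim | (subst_vars; ring)
  show (∑ j, reducedJacobian n G lam lamc γ ⟨i, by omega⟩ j * u j) = _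
  rw [Finset.sum_congr rfl (fun j _ => key j), sum_ite3]

noncomputable def Wv (n : ℕ) (γ : ℕ → ℝ) : ℕ → ℝ
  | 0 => 1
  | k+1 => (γ (n - (k+1)) * Wv n γ k + 1) / (1 - γ (n - k))

noncomputable def Vv (n : ℕ) (lam lamc : ℝ) (γ : ℕ → ℝ) : Fin (n+1) → ℝ :=
  fun i => if i.val = 0 then
      (lam * γ 0 * Wv n γ (n-1) + lamc) / (lam * (1 - γ 1))
    else Wv n γ (n - i.val)

section facts
variable {n : ℕ} (hn : 2 ≤ n) {G lam lamc : ℝ}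
  (hG : 0 < G) (hlam : 0 < lam) (hlamc : 0 < lamc)
  {γ : ℕ → ℝ} (hγ0 : 0 < γ 0)
  (hbound : ∀ i, 1 ≤ i → i ≤ n → γ i ∈ Set.Ioo (0 : ℝ) 1)

include hbound

lemma Wv_pos : ∀ k, k ≤ n - 1 → 0 < Wv n γ k := by
  intro k
  induction k with
  | zero => intro _; norm_num [Wv]
  | succ k ih =>
    intro hk
    have h1 : 1 ≤ n - (k+1) := by omega
    have h2 : n - (k+1) ≤ n := by omega
    have h3 : 1 ≤ n - k := by omega
    have h4 : n - k ≤ n := by omega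
    have hg1 := hbound _ h1 h2
    have hg2 := hbound _ h3 h4
    have hw := ih (by omega)
    rw [Wv]
    have := hg1.1; have := hg2.2
    apply div_pos
    · nlinarith [hg1.1, hw]
    · linarith [hg2.2]
end facts

section facts2
variable {n : ℕ} {G lam lamc : ℝ} {γ : ℕ → ℝ}

lemma Wv_rec (hbound : ∀ i, 1 ≤ i → i ≤ n → γ i ∈ Set.Ioo (0 : ℝ) 1)
    (i : ℕ) (h1 : 1 ≤ i) (h2 : i ≤ n - 1) :
    (1 - γ (i+1)) * Wv n γ (n - i) = γ i * Wv n γ (n - (i+1)) + 1 := by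
  have hni : n - i = (n - (i+1)) + 1 := by omega
  have e1 : n - (n - (i+1) + 1) = i := by omega
  have e2 : n - (n - (i+1)) = i + 1 := by omega
  have hne : 1 - γ (i+1) ≠ 0 := by
    have := (hbound (i+1) (by omega) (by omega)).2; linarith
  rw [hni, Wv, e1, e2, mul_div_cancel₀ _ hne]

lemma Vv_pos (hn : 2 ≤ n) (hlam : 0 < lam) (hlamc : 0 < lamc) (hγ0 : 0 < γ 0)
    (hbound : ∀ i, 1 ≤ i → i ≤ n → γ i ∈ Set.Ioo (0 : ℝ) 1) :
    ∀ i : Fin (n+1), 0 < Vv n lam lamc γ i := by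
  rintro ⟨iv, hi⟩
  by_cases h0 : iv = 0
  · subst h0
    have hw := Wv_pos hbound (n-1) (le_refl _)
    have hg1 := (hbound 1 le_rfl (by omega)).2
    show 0 < if (0:ℕ) = 0 then _ else _
    rw [if_pos rfl]
    apply div_pos
    · nlinarith [mul_pos (mul_pos hlam hγ0) hw]
    · nlinarith
  · show 0 < if iv = 0 then _ else _
    rw [if_neg h0]
    have hle : n - iv ≤ n - 1 := by omega
    exact Wv_pos hbound _ hle

lemma Vv_ker (hn : 2 ≤ n) (hG : 0 < G) (hlam : 0 < lam) (hlamc : 0 < lamc)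
    (hγ0 : 0 < γ 0)
    (hbound : ∀ i, 1 ≤ i → i ≤ n → γ i ∈ Set.Ioo (0 : ℝ) 1) :
    reducedJacobian n G lam lamc γ *ᵥ Vv n lam lamc γ = 0 := by
  have hg1 := hbound 1 le_rfl (by omega)
  have hV0 : Vv n lam lamc γ ⟨0, by omega⟩
      = (lam * γ 0 * Wv n γ (n-1) + lamc) / (lam * (1 - γ 1)) := by
    show (if (0:ℕ) = 0 then _ else _) = _
    rw [if_pos rfl]
  have hVpos : ∀ (j : ℕ), 1 ≤ j → ∀ (hj2 : j ≤ n),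
      Vv n lam lamc γ ⟨j, by omega⟩ = Wv n γ (n - j) := by
    intro j hj hj2
    show (if j = 0 then _ else _) = _
    rw [if_neg (by omega)]
  have hV0' : lam * (1 - γ 1) * Vv n lam lamc γ ⟨0, by omega⟩
      = lam * γ 0 * Wv n γ (n-1) + lamc := by
    rw [hV0, mul_div_cancel₀]
    have := hg1.2
    intro h
    have : lam * (1 - γ 1) > 0 := by nlinarith
    linarith
  funext i
  rcases i with ⟨iv, hi⟩
  show (reducedJacobian n G lam lamc γ *ᵥ Vv n lam lamc γ) ⟨iv, hi⟩ = 0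
  by_cases h0 : iv = 0
  · subst h0
    rw [show (⟨0, hi⟩ : Fin (n+1)) = ⟨0, by omega⟩ from rfl, row0 n hn]
    rw [hVpos 1 le_rfl (by omega), hVpos n (by omega) le_rfl, Nat.sub_self]
    rw [show Wv n γ 0 = 1 from rfl]
    linear_combination (-G) * hV0'
  by_cases h1 : iv = 1
  · subst h1
    rw [show (⟨1, hi⟩ : Fin (n+1)) = ⟨1, by omega⟩ from rfl, row1 n hn]
    rw [hVpos 1 le_rfl (by omega), hVpos 2 (by omega) (by omega)]
    have hrec := Wv_rec hbound 1 le_rfl (by omega)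
    norm_num at hrec
    linear_combination hV0' - lamc * hrec
  by_cases hln : iv = n
  · rw [show (⟨iv, hi⟩ : Fin (n+1)) = ⟨n, by omega⟩ from Fin.ext hln, rown n hn]
    rw [hVpos (n-1) (by omega) (by omega), hVpos n (by omega) le_rfl, Nat.sub_self]
    rw [show Wv n γ 0 = 1 from rfl]
    have hrec := Wv_rec hbound (n-1) (by omega) (by omega)
    rw [show n - 1 + 1 = n by omega, Nat.sub_self,
      show Wv n γ 0 = 1 from rfl] at hrec
    linear_combination lamc * hrec
  · have h2i : 2 ≤ iv := by omega
    have hin : iv ≤ n - 1 := by omega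
    rw [show (⟨iv, hi⟩ : Fin (n+1)) = ⟨iv, by omega⟩ from rfl,
      rowmid n hn G lam lamc γ _ iv h2i hin]
    rw [hVpos (iv-1) (by omega) (by omega), hVpos iv (by omega) (by omega),
      hVpos (iv+1) (by omega) (by omega)]
    have hrec1 := Wv_rec hbound (iv-1) (by omega) (by omega)
    have hrec2 := Wv_rec hbound iv (by omega) hin
    rw [show iv - 1 + 1 = iv by omega] at hrec1
    linear_combination lamc * hrec1 - lamc * hrec2

end facts2

lemma gersh {m : ℕ} (M : Matrix (Fin (m+1)) (Fin (m+1)) ℝ) (v : Fin (m+1) → ℝ)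
    (hv : ∀ i, 0 < v i) (hMv : M *ᵥ v = 0)
    (hoff : ∀ i j, i ≠ j → 0 ≤ M i j)
    {β : ℂ} (hβ : β ∈ spectrum ℂ (M.map (algebraMap ℝ ℂ))) : β.re ≤ 0 := by
  set A := M.map (algebraMap ℝ ℂ) with hA
  rw [spectrum.mem_iff] at hβ
  have hdet : (algebraMap ℂ (Matrix (Fin (m+1)) (Fin (m+1)) ℂ) β - A).det = 0 := by
    by_contra h
    exact hβ ((Matrix.isUnit_iff_isUnit_det _).mpr (isUnit_iff_ne_zero.mpr h))
  obtain ⟨x, hx0, hx⟩ := (Matrix.exists_mulVec_eq_zero_iff).mpr hdet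
  have hev : A *ᵥ x = β • x := by
    rw [Matrix.sub_mulVec] at hx
    have h2 : (algebraMap ℂ (Matrix (Fin (m+1)) (Fin (m+1)) ℂ) β) *ᵥ x = β • x := by
      rw [Algebra.algebraMap_eq_smul_one, Matrix.smul_mulVec, Matrix.one_mulVec]
    rw [h2] at hx
    exact (sub_eq_zero.mp hx).symm
  obtain ⟨i, -, hmax⟩ := Finset.exists_max_image Finset.univ (fun j => ‖x j‖ / v j)
    ⟨0, Finset.mem_univ 0⟩
  have hxi : x i ≠ 0 := by
    intro h
    apply hx0
    funext j
    have hj := hmax j (Finset.mem_univ j)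
    rw [h, norm_zero, zero_div] at hj
    have hvj := hv j
    have : ‖x j‖ ≤ 0 := by
      rw [div_le_iff₀ hvj] at hj; simpa using hj
    simpa using le_antisymm this (norm_nonneg _)
  have hxin : 0 < ‖x i‖ := norm_pos_iff.mpr hxi
  -- row i equation
  have hrow : (∑ j, ((M i j : ℂ)) * x j) = β * x i := by
    have := congrFun hev i
    simpa [hA, Matrix.mulVec, dotProduct, Matrix.map_apply] using this
  have hsplit : (β - (M i i : ℂ)) * x i = ∑ j ∈ Finset.univ.erase i, (M i j : ℂ) * x j := by
    have := Finset.sum_erase_add Finset.univ (fun j => (M i j : ℂ) * x j) (Finset.mem_univ i)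
    rw [hrow] at this
    rw [sub_mul]
    linear_combination -this
  -- the row sum of M * v
  have hrowv : (∑ j ∈ Finset.univ.erase i, M i j * v j) = -(M i i * v i) := by
    have h0 : (∑ j, M i j * v j) = 0 := congrFun hMv i
    have := Finset.sum_erase_add Finset.univ (fun j => M i j * v j) (Finset.mem_univ i)
    rw [h0] at this
    have h1 : (∑ j ∈ Finset.univ.erase i, M i j * v j) + M i i * v i = 0 := by
      simpa using this
    linarith
  have hbound : ‖β - (M i i : ℂ)‖ * ‖x i‖ ≤ (-(M i i)) * ‖x i‖ := by
    calc ‖β - (M i i : ℂ)‖ * ‖x i‖ = ‖(β - (M i i : ℂ)) * x i‖ := (norm_mul _ _).symm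
    _ = ‖∑ j ∈ Finset.univ.erase i, (M i j : ℂ) * x j‖ := by rw [hsplit]
    _ ≤ ∑ j ∈ Finset.univ.erase i, ‖(M i j : ℂ) * x j‖ := norm_sum_le _ _
    _ = ∑ j ∈ Finset.univ.erase i, M i j * ‖x j‖ := by
        refine Finset.sum_congr rfl (fun j hj => ?_)
        rw [norm_mul, Complex.norm_real, Real.norm_eq_abs,
          abs_of_nonneg (hoff i j (fun h => (Finset.mem_erase.mp hj).1 h.symm))]
    _ ≤ ∑ j ∈ Finset.univ.erase i, M i j * (v j * (‖x i‖ / v i)) := by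
        refine Finset.sum_le_sum (fun j hj => ?_)
        have hoffj := hoff i j (fun h => (Finset.mem_erase.mp hj).1 h.symm)
        have hmj := hmax j (Finset.mem_univ j)
        have hvj := hv j
        have : ‖x j‖ ≤ v j * (‖x i‖ / v i) := by
          rw [div_le_div_iff₀ hvj (hv i)] at hmj
          rw [mul_comm (v j), div_mul_eq_mul_div, le_div_iff₀ (hv i)]
          linarith
        nlinarith
    _ = (∑ j ∈ Finset.univ.erase i, M i j * v j) * (‖x i‖ / v i) := by
        rw [Finset.sum_mul]; exact Finset.sum_congr rfl (fun j _ => by ring)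
    _ = (-(M i i * v i)) * (‖x i‖ / v i) := by rw [hrowv]
    _ = (-(M i i)) * ‖x i‖ := by
        have hne : v i ≠ 0 := (hv i).ne'
        field_simp
  have hfin : ‖β - (M i i : ℂ)‖ ≤ -(M i i) := le_of_mul_le_mul_right hbound hxin
  have hre : β.re - M i i ≤ ‖β - (M i i : ℂ)‖ := by
    have := Complex.re_le_norm (β - (M i i : ℂ))
    rwa [Complex.sub_re, Complex.ofReal_re] at *
  linarith

section facts3
variable {n : ℕ} {G lam lamc : ℝ} {γ : ℕ → ℝ}

lemma offdiag_nonneg (hn : 2 ≤ n) (hG : 0 < G) (hlam : 0 < lam) (hlamc : 0 < lamc)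
    (hγ0 : 0 < γ 0)
    (hbound : ∀ i, 1 ≤ i → i ≤ n → γ i ∈ Set.Ioo (0 : ℝ) 1) :
    ∀ i j : Fin (n+1), i ≠ j → 0 ≤ reducedJacobian n G lam lamc γ i j := by
  rintro ⟨iv, hi⟩ ⟨jv, hj⟩ hne
  have hne' : iv ≠ jv := by simpa [Fin.ext_iff] using hne
  simp only [reducedJacobian, Matrix.of_apply]
  split_ifs <;>
  first
    | omega
    | exact ‹False›.elim
    | exact le_refl 0
    | exact le_of_lt (mul_pos (mul_pos hG hlam) hγ0)
    | exact le_of_lt (mul_pos hG hlamc)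
    | exact le_of_lt (mul_pos hlam (by
        rw [sub_pos]; exact (hbound _ (by omega) (by omega)).2))
    | exact le_of_lt (mul_pos hlamc (by
        rw [sub_pos]; exact (hbound _ (by omega) (by omega)).2))
    | exact le_of_lt (mul_pos hlamc (hbound _ (by omega) (by omega)).1)

lemma ker_unique (hn : 2 ≤ n) (hG : 0 < G) (hlam : 0 < lam) (hlamc : 0 < lamc)
    (hγ0 : 0 < γ 0)
    (hbound : ∀ i, 1 ≤ i → i ≤ n → γ i ∈ Set.Ioo (0 : ℝ) 1)
    (u : Fin (n+1) → ℝ)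
    (hu : reducedJacobian n G lam lamc γ *ᵥ u = 0)
    (hlast : u ⟨n, by omega⟩ = 0) : u = 0 := by
  have key : ∀ k, k ≤ n → u ⟨n - k, by omega⟩ = 0 := by
    intro k
    induction k using Nat.strong_induction_on with
    | _ k ih =>
      intro hk
      rcases Nat.lt_or_ge k 2 with h2 | h2
      · interval_cases k
        · rw [show (⟨n - 0, by omega⟩ : Fin (n+1)) = ⟨n, by omega⟩ from Fin.mk_eq_mk.mpr (by omega)]
          exact hlast
        · -- use row n
          have hr := congrFun hu ⟨n, by omega⟩
          rw [rown n hn] at hr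
          rw [hlast] at hr
          have hA : lamc * (1 - γ n) ≠ 0 := by
            have := (hbound n (by omega) le_rfl).2
            have : 0 < lamc * (1 - γ n) := mul_pos hlamc (by linarith)
            linarith
          have : lamc * (1 - γ n) * u ⟨n - 1, by omega⟩ = 0 := by
            rw [show (0:ℝ) = (reducedJacobian n G lam lamc γ *ᵥ u) ⟨n, by omega⟩ from
              (congrFun hu ⟨n, by omega⟩).symm]
            rw [rown n hn, hlast]
            ring
          exact (mul_eq_zero.mp this).resolve_left hA
      · by_cases hkn : k = n
        · -- use row 0
          have h1 : u ⟨1, by omega⟩ = 0 := by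
            have := ih (n - 1) (by omega) (by omega)
            rwa [show (⟨n - (n-1), by omega⟩ : Fin (n+1)) = ⟨1, by omega⟩
              from Fin.mk_eq_mk.mpr (by omega)] at this
          have hr := congrFun hu ⟨0, by omega⟩
          simp only [Pi.zero_apply] at hr
          rw [row0 n hn, h1, hlast] at hr
          have hg1 := (hbound 1 le_rfl (by omega)).2
          have hA : -G * lam * (1 - γ 1) ≠ 0 := by
            have : 0 < G * lam * (1 - γ 1) := by
              apply mul_pos (mul_pos hG hlam); linarith
            intro h
            rw [show -G * lam * (1 - γ 1) = -(G * lam * (1 - γ 1)) by ring] at h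
            rw [neg_eq_zero] at h
            linarith
          have hz : -G * lam * (1 - γ 1) * u ⟨0, by omega⟩ = 0 := by linarith
          have := (mul_eq_zero.mp hz).resolve_left hA
          rwa [show (⟨n - k, by omega⟩ : Fin (n+1)) = ⟨0, by omega⟩
            from Fin.mk_eq_mk.mpr (by omega)]
        · -- mid row i = n - k + 1, with 2 ≤ i ≤ n-1
          set i := n - k + 1 with hidef
          have hi2 : 2 ≤ i := by omega
          have hin : i ≤ n - 1 := by omega
          have hui : u ⟨i, by omega⟩ = 0 := by
            have := ih (k - 1) (by omega) (by omega)
            rwa [show (⟨n - (k-1), by omega⟩ : Fin (n+1)) = ⟨i, by omega⟩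
              from Fin.mk_eq_mk.mpr (by omega)] at this
          have hui1 : u ⟨i + 1, by omega⟩ = 0 := by
            have := ih (k - 2) (by omega) (by omega)
            rwa [show (⟨n - (k-2), by omega⟩ : Fin (n+1)) = ⟨i + 1, by omega⟩
              from Fin.mk_eq_mk.mpr (by omega)] at this
          have hr := congrFun hu ⟨i, by omega⟩
          simp only [Pi.zero_apply] at hr
          rw [rowmid n hn G lam lamc γ u i hi2 hin, hui, hui1] at hr
          have hA : lamc * (1 - γ i) ≠ 0 := by
            have := (hbound i (by omega) (by omega)).2
            have : 0 < lamc * (1 - γ i) := mul_pos hlamc (by linarith)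
            linarith
          have hz : lamc * (1 - γ i) * u ⟨i - 1, by omega⟩ = 0 := by linarith
          have := (mul_eq_zero.mp hz).resolve_left hA
          rwa [show (⟨n - k, by omega⟩ : Fin (n+1)) = ⟨i - 1, by omega⟩
            from Fin.mk_eq_mk.mpr (by omega)]
  funext j
  rcases j with ⟨jv, hj⟩
  have := key (n - jv) (by omega)
  rw [show (⟨n - (n - jv), by omega⟩ : Fin (n+1)) = ⟨jv, hj⟩
    from Fin.mk_eq_mk.mpr (by omega)] at this
  simpa using this

end facts3


/-- Every eigenvalue of the reduced Jacobian `J_{f₁}^red` has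
nonpositive real part, and zero is an eigenvalue of geometric multiplicity
exactly one. -/
theorem reducedJacobian_eigenvalues
    (n : ℕ) (hn : 2 ≤ n) (G lam lamc : ℝ)
    (hG : 0 < G) (hlam : 0 < lam) (hlamc : 0 < lamc)
    (γ : ℕ → ℝ) (hγ0 : 0 < γ 0)
    (hbound : ∀ i, 1 ≤ i → i ≤ n → γ i ∈ Set.Ioo (0 : ℝ) 1) :
    (∀ β : ℂ, β ∈ spectrum ℂ
        ((reducedJacobian n G lam lamc γ).map (algebraMap ℝ ℂ)) → β.re ≤ 0) ∧
    (0 : ℝ) ∈ spectrum ℝ (reducedJacobian n G lam lamc γ) ∧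
    Module.finrank ℝ
      (LinearMap.ker (reducedJacobian n G lam lamc γ).mulVecLin) = 1 := by
  have hVk := Vv_ker hn hG hlam hlamc hγ0 hbound
  have hVp := Vv_pos hn hlam hlamc hγ0 hbound
  have hVne : Vv n lam lamc γ ≠ 0 := by
    intro h
    have h2 := hVp ⟨0, by omega⟩
    rw [h] at h2
    simp at h2
  refine ⟨?_, ?_, ?_⟩
  · intro β hβ
    exact gersh (reducedJacobian n G lam lamc γ) _ hVp hVk
      (offdiag_nonneg hn hG hlam hlamc hγ0 hbound) hβ
  · rw [spectrum.zero_mem_iff]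
    intro hunit
    have hdet0 : (reducedJacobian n G lam lamc γ).det = 0 :=
      Matrix.exists_mulVec_eq_zero_iff.mp ⟨_, hVne, hVk⟩
    have h2 := (Matrix.isUnit_iff_isUnit_det _).mp hunit
    rw [hdet0] at h2
    exact not_isUnit_zero h2
  · set K := LinearMap.ker (reducedJacobian n G lam lamc γ).mulVecLin with hK
    have hVK : Vv n lam lamc γ ∈ K := by
      rw [hK, LinearMap.mem_ker, Matrix.mulVecLin_apply]; exact hVk
    have hle : Module.finrank ℝ K ≤ 1 := by
      let φ : K →ₗ[ℝ] ℝ :=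
        (LinearMap.proj (⟨n, by omega⟩ : Fin (n+1))).comp K.subtype
      have hinj : Function.Injective φ := by
        rw [← LinearMap.ker_eq_bot, LinearMap.ker_eq_bot']
        rintro ⟨u, hu⟩ h
        have hu' : reducedJacobian n G lam lamc γ *ᵥ u = 0 := by
          rwa [hK, LinearMap.mem_ker, Matrix.mulVecLin_apply] at hu
        have h' : u ⟨n, by omega⟩ = 0 := h
        exact Subtype.ext (ker_unique hn hG hlam hlamc hγ0 hbound u hu' h')
      calc Module.finrank ℝ K ≤ Module.finrank ℝ ℝ :=
            LinearMap.finrank_le_finrank_of_injective hinj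
      _ = 1 := Module.finrank_self ℝ
    have hge : 1 ≤ Module.finrank ℝ K := by
      have hne : K ≠ ⊥ := by
        intro h
        exact hVne ((Submodule.eq_bot_iff K).mp h _ hVK)
      rcases Nat.eq_zero_or_pos (Module.finrank ℝ K) with h0 | hp
      · exact absurd (Submodule.finrank_eq_zero.mp h0) hne
      · exact hp
    omega
end

section
/- Each affine subspace S_p^{ext}(G) = {e_1 p} + Im μ(G) is invariant under the flow of the transcription model f_1: the vector field f_1 is everywhere orthogonal to g = (1, G, ..., G, 0)ᵀ, and g is orthogonal to Im μ(G), so solutions starting in S_p^{ext}(G) remain in it. -/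
open Matrix Finset

/-- The transcription flow vector field `f₁` on `ℝ^(n+2)`, with coordinates
`(R, x₁, …, xₙ, M)`. -/
noncomputable def f1vec (n : ℕ) (G lam lamc nu : ℝ) (v : Fin (n + 2) → ℝ) :
    Fin (n + 2) → ℝ := fun i =>
  let w : ℕ → ℝ := fun k => if h : k < n + 2 then v ⟨k, h⟩ else 0
  if i.val = 0 then -G * lam * w 0 * (1 - w 1) + G * lamc * w n
  else if i.val = 1 then lam * w 0 * (1 - w 1) - lamc * w 1 * (1 - w 2)
  else if i.val = n then lamc * w (n - 1) * (1 - w n) - lamc * w n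
  else if i.val = n + 1 then G * lamc * w n - nu * w (n + 1)
  else lamc * w (i.val - 1) * (1 - w i.val) - lamc * w i.val * (1 - w (i.val + 1))

/-- The normal vector `g = (1, G, …, G, 0)ᵀ`. -/
noncomputable def gvec (n : ℕ) (G : ℝ) : Fin (n + 2) → ℝ := fun i =>
  if i.val = 0 then 1 else if i.val ≤ n then G else 0

/-- The matrix `μ(G) ∈ ℝ^((n+2)×(n+1))` spanning the directions of the affine
subspaces `S_p^ext(G)`. -/
noncomputable def muMat (n : ℕ) (G : ℝ) : Matrix (Fin (n + 2)) (Fin (n + 1)) ℝ :=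
  Matrix.of fun i j =>
    if i.val = 0 then (if j.val < n then -G else 0)
    else if i.val = j.val + 1 ∧ j.val < n then 1
    else if i.val = n + 1 ∧ j.val = n then 1
    else 0

/-- The affine subspace `S_p^ext(G) = {e₁ p} + Im μ(G)`. -/
def SpExt (n : ℕ) (G p : ℝ) : Set (Fin (n + 2) → ℝ) :=
  {v | ∃ c : Fin (n + 1) → ℝ,
    v = (fun i => if i.val = 0 then p else 0) + (muMat n G).mulVec c}

lemma dot_gvec (n : ℕ) (G : ℝ) (v : Fin (n + 2) → ℝ) :
    dotProduct v (gvec n G) =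
      v ⟨0, by omega⟩ + G * ∑ k ∈ Finset.range n,
        (if h : k + 1 < n + 2 then v ⟨k + 1, h⟩ else 0) := by
  classical
  set F2 : ℕ → ℝ := fun k =>
    if h : k < n + 2 then v ⟨k, h⟩ * gvec n G ⟨k, h⟩ else 0 with hF2
  have h1 : dotProduct v (gvec n G) = ∑ k ∈ Finset.range (n + 2), F2 k := by
    rw [dotProduct, ← Fin.sum_univ_eq_sum_range]
    exact Finset.sum_congr rfl fun i _ => by rw [hF2]; simp [i.isLt]
  rw [h1, Finset.sum_range_succ' F2 (n + 1), Finset.sum_range_succ]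
  have hn1 : F2 (n + 1) = 0 := by
    simp only [hF2, dif_pos (show n + 1 < n + 2 by omega), gvec]
    rw [if_neg (by omega), if_neg (by omega), mul_zero]
  have h0 : F2 0 = v ⟨0, by omega⟩ := by
    simp [hF2, gvec]
  have hmid : ∀ k ∈ Finset.range n, F2 (k + 1) =
      G * (if h : k + 1 < n + 2 then v ⟨k + 1, h⟩ else 0) := by
    intro k hk
    have hk' : k < n := Finset.mem_range.mp hk
    simp only [hF2, dif_pos (show k + 1 < n + 2 by omega), gvec]
    rw [if_neg (by omega), if_pos (by omega)]
    ring
  rw [Finset.sum_congr rfl hmid, ← Finset.mul_sum, hn1, h0]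
  ring

lemma aux_f1_dot {n : ℕ} (hn : 2 ≤ n) (G lam lamc nu : ℝ) (v : Fin (n + 2) → ℝ) :
    dotProduct (f1vec n G lam lamc nu v) (gvec n G) = 0 := by
  classical
  rw [dot_gvec]
  set W : ℕ → ℝ := fun k => if h : k < n + 2 then v ⟨k, h⟩ else 0 with hW
  have hf1 : ∀ (k : ℕ) (h : k < n + 2), f1vec n G lam lamc nu v ⟨k, h⟩ =
      (if k = 0 then -G * lam * W 0 * (1 - W 1) + G * lamc * W n
       else if k = 1 then lam * W 0 * (1 - W 1) - lamc * W 1 * (1 - W 2)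
       else if k = n then lamc * W (n - 1) * (1 - W n) - lamc * W n
       else if k = n + 1 then G * lamc * W n - nu * W (n + 1)
       else lamc * W (k - 1) * (1 - W k) - lamc * W k * (1 - W (k + 1))) := by
    intro k h
    rw [hW]
    rfl
  set Φ : ℕ → ℝ := fun k =>
    if k = 0 then lam * W 0 * (1 - W 1)
    else if k < n then lamc * W k * (1 - W (k + 1))
    else lamc * W n with hΦ
  have hmid : ∀ k ∈ Finset.range n,
      (if h : k + 1 < n + 2 then f1vec n G lam lamc nu v ⟨k + 1, h⟩ else 0)
        = Φ k - Φ (k + 1) := by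
    intro k hk
    have hk' : k < n := Finset.mem_range.mp hk
    rw [dif_pos (show k + 1 < n + 2 by omega), hf1 (k + 1) (by omega)]
    by_cases h0 : k = 0
    · subst h0
      rw [if_neg (by omega), if_pos rfl]
      have e1 : Φ 0 = lam * W 0 * (1 - W 1) := by
        simp only [hΦ, if_true]
      have e2 : Φ (0 + 1) = lamc * W 1 * (1 - W 2) := by
        simp only [hΦ]; rw [if_neg (by omega), if_pos (by omega)]
      rw [e1, e2]
    · by_cases h1 : k + 1 = n
      · rw [if_neg (by omega), if_neg (by omega), if_pos h1]
        have e1 : Φ k = lamc * W k * (1 - W (k + 1)) := by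
          simp only [hΦ]; rw [if_neg h0, if_pos (by omega)]
        have e2 : Φ (k + 1) = lamc * W n := by
          simp only [hΦ]; rw [if_neg (by omega), if_neg (by omega)]
        rw [e1, e2, show n - 1 = k by omega, show (n : ℕ) = k + 1 from h1.symm]
      · rw [if_neg (by omega), if_neg (by omega), if_neg h1, if_neg (by omega)]
        have e1 : Φ k = lamc * W k * (1 - W (k + 1)) := by
          simp only [hΦ]; rw [if_neg h0, if_pos (by omega)]
        have e2 : Φ (k + 1) = lamc * W (k + 1) * (1 - W (k + 1 + 1)) := by
          simp only [hΦ]; rw [if_neg (by omega), if_pos (by omega)]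
        rw [e1, e2, show k + 1 - 1 = k by omega]
  rw [Finset.sum_congr rfl hmid, Finset.sum_range_sub' Φ n, hf1 0 (by omega),
    if_pos rfl]
  have hΦ0 : Φ 0 = lam * W 0 * (1 - W 1) := by simp only [hΦ, if_true]
  have hΦn : Φ n = lamc * W n := by
    simp only [hΦ]; rw [if_neg (by omega), if_neg (by omega)]
  rw [hΦ0, hΦn]
  ring

lemma aux_mu_dot {n : ℕ} (G : ℝ) (c : Fin (n + 1) → ℝ) :
    dotProduct ((muMat n G).mulVec c) (gvec n G) = 0 := by
  classical
  have hcol : ∀ j : Fin (n + 1), ∑ i : Fin (n + 2), muMat n G i j * gvec n G i = 0 := by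
    intro j
    by_cases hj : j.val < n
    · have hrw : ∀ i : Fin (n + 2), muMat n G i j * gvec n G i =
          (if i = (⟨0, by omega⟩ : Fin (n + 2)) then -G else 0)
          + (if i = (⟨j.val + 1, by omega⟩ : Fin (n + 2)) then G else 0) := by
        intro i
        simp only [muMat, gvec, Matrix.of_apply, Fin.ext_iff]
        split_ifs <;> first | omega | (exfalso; omega) | ring
      rw [Finset.sum_congr rfl fun i _ => hrw i, Finset.sum_add_distrib,
        Finset.sum_ite_eq' Finset.univ, Finset.sum_ite_eq' Finset.univ]
      simp
    · have hrw : ∀ i : Fin (n + 2), muMat n G i j * gvec n G i = 0 := by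
        intro i
        simp only [muMat, gvec, Matrix.of_apply]
        split_ifs <;> first | omega | (exfalso; omega) | ring
      rw [Finset.sum_congr rfl fun i _ => hrw i]
      simp
  calc dotProduct ((muMat n G).mulVec c) (gvec n G)
      = ∑ i : Fin (n + 2), ∑ j : Fin (n + 1),
          c j * (muMat n G i j * gvec n G i) := by
        refine Finset.sum_congr rfl fun i _ => ?_
        rw [Matrix.mulVec, dotProduct, Finset.sum_mul]
        exact Finset.sum_congr rfl fun j _ => by ring
    _ = ∑ j : Fin (n + 1), ∑ i : Fin (n + 2),
          c j * (muMat n G i j * gvec n G i) := Finset.sum_comm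
    _ = 0 := by
        refine Finset.sum_eq_zero fun j _ => ?_
        rw [← Finset.mul_sum, hcol j, mul_zero]

lemma mu_mulVec {n : ℕ} (G : ℝ) (c : Fin (n + 1) → ℝ) (i : Fin (n + 2)) :
    (muMat n G).mulVec c i =
      if i.val = 0 then
        -G * ∑ k ∈ Finset.range n, (if h : k < n + 1 then c ⟨k, h⟩ else 0)
      else c ⟨i.val - 1, by omega⟩ := by
  classical
  rw [Matrix.mulVec, dotProduct]
  by_cases hi0 : i.val = 0
  · rw [if_pos hi0]
    set F3 : ℕ → ℝ := fun k =>
      if h : k < n + 1 then muMat n G i ⟨k, h⟩ * c ⟨k, h⟩ else 0 with hF3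
    have h1 : ∑ j : Fin (n + 1), muMat n G i j * c j
        = ∑ k ∈ Finset.range (n + 1), F3 k := by
      rw [← Fin.sum_univ_eq_sum_range]
      exact Finset.sum_congr rfl fun j _ => by rw [hF3]; simp [j.isLt]
    rw [h1, Finset.sum_range_succ]
    have hFn : F3 n = 0 := by
      simp only [hF3, dif_pos (show n < n + 1 by omega), muMat, Matrix.of_apply]
      rw [if_pos hi0, if_neg (by omega), zero_mul]
    have hFk : ∀ k ∈ Finset.range n,
        F3 k = -G * (if h : k < n + 1 then c ⟨k, h⟩ else 0) := by
      intro k hk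
      have hk' := Finset.mem_range.mp hk
      simp only [hF3, dif_pos (show k < n + 1 by omega), muMat, Matrix.of_apply]
      rw [if_pos hi0, if_pos (by omega)]
    rw [Finset.sum_congr rfl hFk, ← Finset.mul_sum, hFn, add_zero]
  · rw [if_neg hi0]
    have hpt : ∀ j : Fin (n + 1), muMat n G i j * c j =
        if j = (⟨i.val - 1, by omega⟩ : Fin (n + 1)) then c j else 0 := by
      intro j
      simp only [muMat, Matrix.of_apply, Fin.ext_iff]
      split_ifs <;> first | omega | (exfalso; omega) | ring
    rw [Finset.sum_congr rfl fun j _ => hpt j, Finset.sum_ite_eq' Finset.univ,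
      if_pos (Finset.mem_univ _)]

lemma aux_mem_iff {n : ℕ} (hn : 2 ≤ n) (G p : ℝ) (v : Fin (n + 2) → ℝ) :
    v ∈ SpExt n G p ↔ dotProduct v (gvec n G) = p := by
  constructor
  · rintro ⟨c, rfl⟩
    rw [add_dotProduct, aux_mu_dot, add_zero, dot_gvec]
    simp
  · intro hd
    rw [dot_gvec] at hd
    refine ⟨fun j => v ⟨j.val + 1, by omega⟩, funext fun i => ?_⟩
    simp only [Pi.add_apply]
    rw [mu_mulVec]
    by_cases hi0 : i.val = 0
    · rw [if_pos hi0, if_pos hi0]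
      have h2 : ∑ k ∈ Finset.range n,
          (if h : k < n + 1 then
            (fun j : Fin (n + 1) => v ⟨j.val + 1, by omega⟩) ⟨k, h⟩ else 0)
          = ∑ k ∈ Finset.range n, (if h : k + 1 < n + 2 then v ⟨k + 1, h⟩ else 0) := by
        refine Finset.sum_congr rfl fun k hk => ?_
        have hk' := Finset.mem_range.mp hk
        rw [dif_pos (by omega), dif_pos (by omega)]
      rw [h2]
      have h3 : v i = v ⟨0, by omega⟩ := congrArg v (Fin.ext hi0)
      rw [h3]
      linarith [hd]
    · rw [if_neg hi0, if_neg hi0, zero_add]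
      show v i = v ⟨i.val - 1 + 1, by omega⟩
      exact congrArg v (Fin.ext (show i.val = i.val - 1 + 1 by omega))

/-- Each affine subspace `S_p^ext(G)` is invariant under the flow of
the transcription model: `f₁` is everywhere orthogonal to `g = (1, G, …, G, 0)ᵀ`,
`g` is orthogonal to `Im μ(G)`, and solutions starting in `S_p^ext(G)` remain
in it. -/
theorem SpExt_invariant
    (n : ℕ) (hn : 2 ≤ n) (G lam lamc nu p : ℝ)
    (hG : 0 < G) (hlam : 0 < lam) (hlamc : 0 < lamc) (hnu : 0 < nu) (hp : 0 < p) :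
    (∀ v : Fin (n + 2) → ℝ,
      dotProduct (f1vec n G lam lamc nu v) (gvec n G) = 0) ∧
    (∀ c : Fin (n + 1) → ℝ,
      dotProduct ((muMat n G).mulVec c) (gvec n G) = 0) ∧
    (∀ y : ℝ → Fin (n + 2) → ℝ,
      (∀ i t, HasDerivAt (fun u => y u i) (f1vec n G lam lamc nu (y t) i) t) →
      y 0 ∈ SpExt n G p → ∀ t, y t ∈ SpExt n G p) := by
  refine ⟨fun v => aux_f1_dot hn G lam lamc nu v, fun c => aux_mu_dot G c, ?_⟩
  intro y hy h0 t
  have hder : ∀ s : ℝ,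
      HasDerivAt (fun u => dotProduct (y u) (gvec n G)) 0 s := by
    intro s
    have h2 := HasDerivAt.sum
      (fun i (_ : i ∈ Finset.univ) => (hy i s).mul_const (gvec n G i))
    have h3 : ∑ i : Fin (n + 2), f1vec n G lam lamc nu (y s) i * gvec n G i = 0 :=
      aux_f1_dot hn G lam lamc nu (y s)
    rw [h3] at h2
    have hfun : (∑ i : Fin (n + 2), fun u => y u i * gvec n G i)
        = fun u => dotProduct (y u) (gvec n G) := by
      funext u
      rw [Finset.sum_apply]
      rfl
    rw [hfun] at h2
    exact h2
  have hconst : dotProduct (y t) (gvec n G)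
      = dotProduct (y 0) (gvec n G) := by
    have hdiff : Differentiable ℝ (fun u => dotProduct (y u) (gvec n G)) :=
      fun s => (hder s).differentiableAt
    exact is_const_of_deriv_eq_zero hdiff (fun s => (hder s).deriv) t 0
  rw [aux_mem_iff hn, hconst]
  exact (aux_mem_iff hn G p (y 0)).mp h0
end

section
/- For all s ∈ (0, s̄), every component of the velocity vector γ'(s) of the equilibrium curve is strictly positive, i.e., γ_i'(s) > 0 for all i ∈ {0, 1, ..., n+1}. -/
/-!
Going down the chain from `γ_{n+1}` and `γ_n`, which are linear with positive slope: by the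
quotient rule, `(c s / (1 - g s))' = c (1 - g s + s g'(s)) / (1 - g s)²`, which is positive as
soon as `g < 1` and `g' ≥ 0`. Each `γ_i`, `i < n`, has this form with `g = γ_{i+1}`.
-/

open Filter Topology

lemma pos_of_hasDerivAt_of_eventuallyEq_const_mul {f : ℝ → ℝ} {f' c s : ℝ}
    (hf : HasDerivAt f f' s) (heq : f =ᶠ[𝓝 s] fun t => c * t) (hc : 0 < c) : 0 < f' := by
  have hlin : HasDerivAt f (c * 1) s :=
    ((hasDerivAt_id s).const_mul c).congr_of_eventuallyEq heq
  rw [hf.unique hlin, mul_one]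
  exact hc

lemma pos_of_hasDerivAt_of_eventuallyEq_mul_div_one_sub {f g : ℝ → ℝ} {f' g' c s : ℝ}
    (hf : HasDerivAt f f' s) (hg : HasDerivAt g g' s)
    (heq : f =ᶠ[𝓝 s] fun t => c * t / (1 - g t))
    (hc : 0 < c) (hs : 0 < s) (hgs : g s < 1) (hg' : 0 ≤ g') : 0 < f' := by
  have hden : 0 < 1 - g s := sub_pos.mpr hgs
  have hquot : HasDerivAt f
      ((c * 1 * (1 - g s) - c * s * (0 - g')) / (1 - g s) ^ 2) s :=
    (((hasDerivAt_id s).const_mul c).div ((hasDerivAt_const s 1).sub hg)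
      hden.ne').congr_of_eventuallyEq heq
  rw [hf.unique hquot]
  apply div_pos _ (by positivity)
  nlinarith [mul_pos hc hden, mul_nonneg (mul_pos hc hs).le hg']

theorem gamma_velocity_positive_general
    (n : ℕ) (G lam lamc nu : ℝ)
    (hG : 0 < G) (hlam : 0 < lam) (hlamc : 0 < lamc) (hnu : 0 < nu)
    (sbar : ℝ)
    (γ γ' : ℕ → ℝ → ℝ)
    (hγn : ∀ s ∈ Set.Ioo 0 sbar, γ n s = s)
    (hγmid : ∀ i, 1 ≤ i → i ≤ n - 1 → ∀ s ∈ Set.Ioo 0 sbar,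
      γ i s = s / (1 - γ (i + 1) s))
    (hγ0 : ∀ s ∈ Set.Ioo 0 sbar, γ 0 s = lamc * s / (lam * (1 - γ 1 s)))
    (hγlast : ∀ s ∈ Set.Ioo 0 sbar, γ (n + 1) s = (G * lamc / nu) * s)
    (hbound : ∀ i, 1 ≤ i → i ≤ n → ∀ s ∈ Set.Ioo 0 sbar, γ i s ∈ Set.Ioo (0 : ℝ) 1)
    (hderiv : ∀ i, i ≤ n + 1 → ∀ s ∈ Set.Ioo 0 sbar, HasDerivAt (γ i) (γ' i s) s) :
    ∀ s ∈ Set.Ioo 0 sbar, ∀ i, i ≤ n + 1 → 0 < γ' i s := by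
  intro s hs i hi
  have hnhds : Set.Ioo 0 sbar ∈ 𝓝 s := isOpen_Ioo.mem_nhds hs
  rcases hi.eq_or_lt with rfl | hin
  · exact pos_of_hasDerivAt_of_eventuallyEq_const_mul (hderiv _ le_rfl s hs)
      (eventuallyEq_of_mem hnhds hγlast) (by positivity)
  refine Nat.decreasingInduction (motive := fun i _ => 0 < γ' i s) ?_ ?_ (Nat.lt_succ_iff.mp hin)
  · intro k hk hnext
    have hg := hderiv (k + 1) (by omega) s hs
    have hgs := (hbound (k + 1) (by omega) hk s hs).2
    rcases Nat.eq_zero_or_pos k with rfl | hk0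
    · refine pos_of_hasDerivAt_of_eventuallyEq_mul_div_one_sub (c := lamc / lam)
        (hderiv 0 (by omega) s hs) hg ?_ (by positivity) hs.1 hgs hnext.le
      filter_upwards [hnhds] with t ht
      rw [hγ0 t ht, div_mul_eq_mul_div, div_div]
    · exact pos_of_hasDerivAt_of_eventuallyEq_mul_div_one_sub (c := 1)
        (hderiv k (by omega) s hs) hg
        (eventuallyEq_of_mem hnhds fun t ht => by simp [hγmid k hk0 (by omega) t ht])
        one_pos hs.1 hgs hnext.le
  · exact pos_of_hasDerivAt_of_eventuallyEq_const_mul (c := 1) (hderiv n (by omega) s hs)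
      (eventuallyEq_of_mem hnhds fun t ht => by simp [hγn t ht]) one_pos

/-- For all `s ∈ (0, s̄)`, every component of the velocity vector
`γ'(s)` of the equilibrium curve is strictly positive. -/
theorem gamma_velocity_positive
    (n : ℕ) (hn : 2 ≤ n) (G lam lamc nu : ℝ)
    (hG : 0 < G) (hlam : 0 < lam) (hlamc : 0 < lamc) (hnu : 0 < nu)
    (sbar : ℝ) (hsbar : 0 < sbar)
    (γ γ' : ℕ → ℝ → ℝ)
    (hγn : ∀ s ∈ Set.Ioo 0 sbar, γ n s = s)
    (hγmid : ∀ i, 1 ≤ i → i ≤ n - 1 → ∀ s ∈ Set.Ioo 0 sbar,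
      γ i s = s / (1 - γ (i + 1) s))
    (hγ0 : ∀ s ∈ Set.Ioo 0 sbar, γ 0 s = lamc * s / (lam * (1 - γ 1 s)))
    (hγlast : ∀ s ∈ Set.Ioo 0 sbar, γ (n + 1) s = (G * lamc / nu) * s)
    (hbound : ∀ i, 1 ≤ i → i ≤ n → ∀ s ∈ Set.Ioo 0 sbar, γ i s ∈ Set.Ioo (0 : ℝ) 1)
    (hderiv : ∀ i, i ≤ n + 1 → ∀ s ∈ Set.Ioo 0 sbar, HasDerivAt (γ i) (γ' i s) s) :
    ∀ s ∈ Set.Ioo 0 sbar, ∀ i, i ≤ n + 1 → 0 < γ' i s :=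
  gamma_velocity_positive_general n G lam lamc nu hG hlam hlamc hnu sbar γ γ' hγn hγmid hγ0 hγlast
    hbound hderiv
end

section
/- For each (s, l) ∈ (0, s̄) × (0, l̄), the point Ψ(s, l) = (γ(s), ξ(s, l)) is an equilibrium of the combined transcription-translation model, where ξ is defined by ξ_m(s,l) = l, ξ_i(s,l) = l/(1-ξ_{i+1}(s,l)) for 1 ≤ i ≤ m-1, ξ_0(s,l) = η_c l/(η(1-ξ_1(s,l))), ξ_{m+1}(s,l) = (Gλ_cη_c)/(νδ)·s·l. -/
/-!
Both γ(s) and ξ(s, l) are steady states of a ribosome-flow chain carrying a constant current: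
the recursions make every internal flux `zᵢ (1 - zᵢ₊₁)` equal to the exit flux `z_k`, and the
formula for `z₀` makes the entry flux match it, so all the differences of consecutive fluxes in
the chain vanish. The remaining equations (mRNA and protein production against degradation, and
the free-ribosome balance) are then direct substitutions of `M̄ = Gλ_c s/ν` and
`ξ_{m+1} = Gλ_cη_c s l/(νδ)`.
-/

section ConstantCurrentChain

variable {z : ℕ → ℝ} {k : ℕ} {a r c : ℝ}

lemma current_eq_of_eq_div (hmid : ∀ i, 1 ≤ i → i ≤ k - 1 → z i = c / (1 - z (i + 1)))
    (hlt : ∀ i, 1 ≤ i → i ≤ k → z i < 1) :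
    ∀ i, 1 ≤ i → i ≤ k - 1 → z i * (1 - z (i + 1)) = c := by
  intro i h1 h2
  have hne : 1 - z (i + 1) ≠ 0 := (sub_pos.2 (hlt (i + 1) (by omega) (by omega))).ne'
  rw [hmid i h1 h2, div_mul_cancel₀ _ hne]

lemma entry_current_eq (h0 : z 0 = r * c / (a * (1 - z 1))) (ha : a ≠ 0) (h1 : z 1 < 1) :
    a * z 0 * (1 - z 1) = r * c := by
  have hne : 1 - z 1 ≠ 0 := (sub_pos.2 h1).ne'
  rw [h0]
  field_simp

lemma flow_balance_of_constant_current (hk : 2 ≤ k) (hentry : a * z 0 * (1 - z 1) = r * c)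
    (hcur : ∀ i, 1 ≤ i → i ≤ k - 1 → z i * (1 - z (i + 1)) = c) (hlast : z k = c) :
    (a * z 0 * (1 - z 1) - r * z 1 * (1 - z 2) = 0) ∧
    (∀ i, 2 ≤ i → i ≤ k - 1 → r * z (i - 1) * (1 - z i) - r * z i * (1 - z (i + 1)) = 0) ∧
    (r * z (k - 1) * (1 - z k) - r * z k = 0) := by
  refine ⟨?_, ?_, ?_⟩
  · linear_combination hentry - r * hcur 1 le_rfl (by omega)
  · intro i h2 h3
    obtain ⟨j, rfl⟩ : ∃ j, i = j + 1 := ⟨i - 1, by omega⟩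
    rw [Nat.add_sub_cancel]
    linear_combination r * hcur j (by omega) (by omega) - r * hcur (j + 1) (by omega) h3
  · obtain ⟨j, rfl⟩ : ∃ j, k = j + 1 := ⟨k - 1, by omega⟩
    rw [Nat.add_sub_cancel]
    linear_combination r * hcur j (by omega) (by omega) - r * hlast

end ConstantCurrentChain

theorem Psi_is_equilibrium_general
    (n m : ℕ) (hn : 2 ≤ n) (hm : 2 ≤ m)
    (G lam lamc nu eta etac delta : ℝ)
    (hlam : 0 < lam) (hnu : 0 < nu)
    (heta : 0 < eta) (hdelta : 0 < delta)
    (s l : ℝ)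
    (γ ξ : ℕ → ℝ)
    -- the transcription equilibrium curve γ(s)
    (hγn : γ n = s)
    (hγmid : ∀ i, 1 ≤ i → i ≤ n - 1 → γ i = s / (1 - γ (i + 1)))
    (hγ0 : γ 0 = lamc * s / (lam * (1 - γ 1)))
    (hγlast : γ (n + 1) = G * lamc / nu * s)
    (hγbound : ∀ i, 1 ≤ i → i ≤ n → γ i ∈ Set.Ioo (0 : ℝ) 1)
    -- the translation fibre ξ(s, l)
    (hξm : ξ m = l)
    (hξmid : ∀ i, 1 ≤ i → i ≤ m - 1 → ξ i = l / (1 - ξ (i + 1)))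
    (hξ0 : ξ 0 = etac * l / (eta * (1 - ξ 1)))
    (hξlast : ξ (m + 1) = G * lamc * etac / (nu * delta) * s * l)
    (hξbound : ∀ i, 1 ≤ i → i ≤ m → ξ i ∈ Set.Ioo (0 : ℝ) 1) :
    -- transcription part: ẋ = f₁(x) vanishes at γ(s)
    (-G * lam * γ 0 * (1 - γ 1) + G * lamc * γ n = 0) ∧
    (lam * γ 0 * (1 - γ 1) - lamc * γ 1 * (1 - γ 2) = 0) ∧
    (∀ i, 2 ≤ i → i ≤ n - 1 →
      lamc * γ (i - 1) * (1 - γ i) - lamc * γ i * (1 - γ (i + 1)) = 0) ∧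
    (lamc * γ (n - 1) * (1 - γ n) - lamc * γ n = 0) ∧
    (G * lamc * γ n - nu * γ (n + 1) = 0) ∧
    -- translation part: ż = f₂(x, z) vanishes at (γ(s), ξ(s, l)), with M = γ(n+1)
    (-(G * lamc * γ n - nu * γ (n + 1)) * (∑ i ∈ Finset.Icc 1 m, ξ i)
      - γ (n + 1) * eta * ξ 0 * (1 - ξ 1) + γ (n + 1) * etac * ξ m = 0) ∧
    (eta * ξ 0 * (1 - ξ 1) - etac * ξ 1 * (1 - ξ 2) = 0) ∧
    (∀ i, 2 ≤ i → i ≤ m - 1 →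
      etac * ξ (i - 1) * (1 - ξ i) - etac * ξ i * (1 - ξ (i + 1)) = 0) ∧
    (etac * ξ (m - 1) * (1 - ξ m) - etac * ξ m = 0) ∧
    (γ (n + 1) * etac * ξ m - delta * ξ (m + 1) = 0) := by
  have hγlt : ∀ i, 1 ≤ i → i ≤ n → γ i < 1 := fun i h1 h2 => (hγbound i h1 h2).2
  have hξlt : ∀ i, 1 ≤ i → i ≤ m → ξ i < 1 := fun i h1 h2 => (hξbound i h1 h2).2
  have hγentry := entry_current_eq hγ0 hlam.ne' (hγlt 1 le_rfl (by omega))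
  have hξentry := entry_current_eq hξ0 heta.ne' (hξlt 1 le_rfl (by omega))
  obtain ⟨hγfirst, hγinner, hγexit⟩ :=
    flow_balance_of_constant_current hn hγentry (current_eq_of_eq_div hγmid hγlt) hγn
  obtain ⟨hξfirst, hξinner, hξexit⟩ :=
    flow_balance_of_constant_current hm hξentry (current_eq_of_eq_div hξmid hξlt) hξm
  have hmRNA : G * lamc * γ n - nu * γ (n + 1) = 0 := by
    rw [hγn, hγlast]
    field_simp
    ring
  refine ⟨by linear_combination -G * hγentry + G * lamc * hγn, hγfirst, hγinner, hγexit, hmRNA,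
    ?_, hξfirst, hξinner, hξexit, ?_⟩
  · linear_combination -(∑ i ∈ Finset.Icc 1 m, ξ i) * hmRNA - γ (n + 1) * hξentry
      + γ (n + 1) * etac * hξm
  · rw [hγlast, hξm, hξlast]
    field_simp
    ring

/-- For each `(s, l) ∈ (0, s̄) × (0, l̄)`, the point
`Ψ(s, l) = (γ(s), ξ(s, l))` is an equilibrium of the combined
transcription–translation model. -/
theorem Psi_is_equilibrium
    (n m : ℕ) (hn : 2 ≤ n) (hm : 2 ≤ m)
    (G lam lamc nu eta etac delta : ℝ)
    (hG : 0 < G) (hlam : 0 < lam) (hlamc : 0 < lamc) (hnu : 0 < nu)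
    (heta : 0 < eta) (hetac : 0 < etac) (hdelta : 0 < delta)
    (sbar lbar s l : ℝ) (hs : s ∈ Set.Ioo 0 sbar) (hl : l ∈ Set.Ioo 0 lbar)
    (γ ξ : ℕ → ℝ)
    -- the transcription equilibrium curve γ(s)
    (hγn : γ n = s)
    (hγmid : ∀ i, 1 ≤ i → i ≤ n - 1 → γ i = s / (1 - γ (i + 1)))
    (hγ0 : γ 0 = lamc * s / (lam * (1 - γ 1)))
    (hγlast : γ (n + 1) = G * lamc / nu * s)
    (hγbound : ∀ i, 1 ≤ i → i ≤ n → γ i ∈ Set.Ioo (0 : ℝ) 1)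
    -- the translation fibre ξ(s, l)
    (hξm : ξ m = l)
    (hξmid : ∀ i, 1 ≤ i → i ≤ m - 1 → ξ i = l / (1 - ξ (i + 1)))
    (hξ0 : ξ 0 = etac * l / (eta * (1 - ξ 1)))
    (hξlast : ξ (m + 1) = G * lamc * etac / (nu * delta) * s * l)
    (hξbound : ∀ i, 1 ≤ i → i ≤ m → ξ i ∈ Set.Ioo (0 : ℝ) 1) :
    -- transcription part: ẋ = f₁(x) vanishes at γ(s)
    (-G * lam * γ 0 * (1 - γ 1) + G * lamc * γ n = 0) ∧
    (lam * γ 0 * (1 - γ 1) - lamc * γ 1 * (1 - γ 2) = 0) ∧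
    (∀ i, 2 ≤ i → i ≤ n - 1 →
      lamc * γ (i - 1) * (1 - γ i) - lamc * γ i * (1 - γ (i + 1)) = 0) ∧
    (lamc * γ (n - 1) * (1 - γ n) - lamc * γ n = 0) ∧
    (G * lamc * γ n - nu * γ (n + 1) = 0) ∧
    -- translation part: ż = f₂(x, z) vanishes at (γ(s), ξ(s, l)), with M = γ(n+1)
    (-(G * lamc * γ n - nu * γ (n + 1)) * (∑ i ∈ Finset.Icc 1 m, ξ i)
      - γ (n + 1) * eta * ξ 0 * (1 - ξ 1) + γ (n + 1) * etac * ξ m = 0) ∧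
    (eta * ξ 0 * (1 - ξ 1) - etac * ξ 1 * (1 - ξ 2) = 0) ∧
    (∀ i, 2 ≤ i → i ≤ m - 1 →
      etac * ξ (i - 1) * (1 - ξ i) - etac * ξ i * (1 - ξ (i + 1)) = 0) ∧
    (etac * ξ (m - 1) * (1 - ξ m) - etac * ξ m = 0) ∧
    (γ (n + 1) * etac * ξ m - delta * ξ (m + 1) = 0) :=
  Psi_is_equilibrium_general n m hn hm G lam lamc nu eta etac delta hlam hnu heta hdelta s l γ ξ hγn
    hγmid hγ0 hγlast hγbound hξm hξmid hξ0 hξlast hξbound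
end

section
/- The tangent vector Ψ_l = ∂Ψ/∂l = (0, ..., 0, ∂ξ_0/∂l, ..., ∂ξ_{m+1}/∂l) lies in the kernel of the Jacobian J(Ψ(s,l)) of the combined model, i.e. J_{f_2}^z · (∂ξ/∂l) = 0, where ξ satisfies the same recursion structure as γ with parameters (η, η_c, M̄, δ) in place of (λ, λ_c, G, ν). -/
/-! Each defining relation says that one of `ξ₀ (1 - ξ₁)`, `ξᵢ (1 - ξᵢ₊₁)` (`1 ≤ i < m`), `ξₘ`,
`ξₘ₊₁` equals a constant times `l` near `l` (the constants being `η_c / η`, `1`, `1`, `M̄ η_c / δ`),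
so differentiating gives a linear identity in the `ξ'ᵢ`. Each entry of `J_{f₂}^z ξ'` is a
combination of at most two of these identities; an interior row `i` is `η_c` times the
difference of the identities for `i - 1` and `i`. -/

open Matrix

/-- The flow Jacobian block with parameters `(M̄, η, η_c, δ)`: this is
`J_{f₂}^z` (eq. (jacobiXi) of the paper), of the same structure as `J_{f₁}`. -/
noncomputable def flowJacobian (m : ℕ) (Mbar eta etac delta : ℝ) (ξ : ℕ → ℝ) :
    Matrix (Fin (m + 2)) (Fin (m + 2)) ℝ :=
  Matrix.of fun i j =>
    if i.val = 0 then
      if j.val = 0 then -Mbar * eta * (1 - ξ 1)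
      else if j.val = 1 then Mbar * eta * ξ 0
      else if j.val = m then Mbar * etac else 0
    else if i.val = 1 then
      if j.val = 0 then eta * (1 - ξ 1)
      else if j.val = 1 then -etac * (1 - ξ 2) - eta * ξ 0
      else if j.val = 2 then etac * ξ 1 else 0
    else if i.val = m then
      if j.val = m - 1 then etac * (1 - ξ m)
      else if j.val = m then -etac * (1 + ξ (m - 1)) else 0
    else if i.val = m + 1 then
      if j.val = m then Mbar * etac
      else if j.val = m + 1 then -delta else 0
    else
      if j.val = i.val - 1 then etac * (1 - ξ i.val)
      else if j.val = i.val then -etac * (1 - ξ (i.val + 1) + ξ (i.val - 1))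
      else if j.val = i.val + 1 then etac * ξ i.val else 0

open Filter Topology

section RowSums

variable {ι M : Type*} [Fintype ι] [DecidableEq ι] [AddCommMonoid M]

lemma Fintype.sum_eq_of_eq_ite_add_ite_add_ite (f : ι → M) (a b c : ι) (A B C : M)
    (h : ∀ j, f j = (if j = a then A else 0) + (if j = b then B else 0)
        + (if j = c then C else 0)) :
    ∑ j, f j = A + B + C := by
  simp only [h, Finset.sum_add_distrib, Finset.sum_ite_eq', Finset.mem_univ, if_true]

lemma Fintype.sum_eq_of_eq_ite_add_ite (f : ι → M) (a b : ι) (A B : M)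
    (h : ∀ j, f j = (if j = a then A else 0) + (if j = b then B else 0)) :
    ∑ j, f j = A + B := by
  simp only [h, Finset.sum_add_distrib, Finset.sum_ite_eq', Finset.mem_univ, if_true]

end RowSums

section FlowJacobianRows

variable {m : ℕ} {Mbar eta etac delta : ℝ} (ξ v : ℕ → ℝ) (i : Fin (m + 2))

lemma flowJacobian_mulVec_of_val_eq_zero (hm : 2 ≤ m) (hi : i.val = 0) :
    (flowJacobian m Mbar eta etac delta ξ *ᵥ fun j => v j.val) i =
      -Mbar * eta * (1 - ξ 1) * v 0 + Mbar * eta * ξ 0 * v 1 + Mbar * etac * v m := by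
  refine Fintype.sum_eq_of_eq_ite_add_ite_add_ite (ι := Fin (m + 2)) _
    ⟨0, by omega⟩ ⟨1, by omega⟩ ⟨m, by omega⟩ _ _ _ fun ⟨j, hj⟩ => ?_
  simp only [flowJacobian, Matrix.of_apply, hi, Fin.ext_iff, if_true]
  split_ifs <;> first | contradiction | omega | ring1 | (subst_vars; ring1)

lemma flowJacobian_mulVec_of_val_eq_one (hm : 0 < m) (hi : i.val = 1) :
    (flowJacobian m Mbar eta etac delta ξ *ᵥ fun j => v j.val) i =
      eta * (1 - ξ 1) * v 0 + (-etac * (1 - ξ 2) - eta * ξ 0) * v 1 + etac * ξ 1 * v 2 := by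
  refine Fintype.sum_eq_of_eq_ite_add_ite_add_ite (ι := Fin (m + 2)) _
    ⟨0, by omega⟩ ⟨1, by omega⟩ ⟨2, by omega⟩ _ _ _ fun ⟨j, hj⟩ => ?_
  simp only [flowJacobian, Matrix.of_apply, hi, Fin.ext_iff, one_ne_zero, if_true, if_false]
  split_ifs <;> first | contradiction | omega | ring1 | (subst_vars; ring1)

lemma flowJacobian_mulVec_of_val_eq_self (hm : 2 ≤ m) (hi : i.val = m) :
    (flowJacobian m Mbar eta etac delta ξ *ᵥ fun j => v j.val) i =
      etac * (1 - ξ m) * v (m - 1) + -etac * (1 + ξ (m - 1)) * v m := by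
  refine Fintype.sum_eq_of_eq_ite_add_ite (ι := Fin (m + 2)) _
    ⟨m - 1, by omega⟩ ⟨m, by omega⟩ _ _ fun ⟨j, hj⟩ => ?_
  simp only [flowJacobian, Matrix.of_apply, hi, Fin.ext_iff]
  split_ifs <;> first | contradiction | omega | ring1 | (subst_vars; ring1)

lemma flowJacobian_mulVec_of_val_eq_succ (hm : 2 ≤ m) (hi : i.val = m + 1) :
    (flowJacobian m Mbar eta etac delta ξ *ᵥ fun j => v j.val) i =
      Mbar * etac * v m + -delta * v (m + 1) := by
  refine Fintype.sum_eq_of_eq_ite_add_ite (ι := Fin (m + 2)) _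
    ⟨m, by omega⟩ ⟨m + 1, by omega⟩ _ _ fun ⟨j, hj⟩ => ?_
  simp only [flowJacobian, Matrix.of_apply, hi, Fin.ext_iff]
  split_ifs <;> first | contradiction | omega | ring1 | (subst_vars; ring1)

lemma flowJacobian_mulVec_of_two_le_of_lt (h2 : 2 ≤ i.val) (him : i.val < m) :
    (flowJacobian m Mbar eta etac delta ξ *ᵥ fun j => v j.val) i =
      etac * (1 - ξ i) * v (i - 1) + -etac * (1 - ξ (i + 1) + ξ (i - 1)) * v i
        + etac * ξ i * v (i + 1) := by
  refine Fintype.sum_eq_of_eq_ite_add_ite_add_ite (ι := Fin (m + 2)) _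
    ⟨i - 1, by omega⟩ i ⟨i + 1, by omega⟩ _ _ _ fun ⟨j, hj⟩ => ?_
  simp only [flowJacobian, Matrix.of_apply, Fin.ext_iff]
  split_ifs <;> first | contradiction | omega | ring1 | (subst_vars; ring1)

end FlowJacobianRows

theorem flowJacobian_mulVec_eq_zero {m : ℕ} (hm : 2 ≤ m) {Mbar eta etac delta : ℝ}
    (heta : eta ≠ 0) (hdelta : delta ≠ 0) (ξ v : ℕ → ℝ)
    (h₀ : v 0 * (1 - ξ 1) - ξ 0 * v 1 = etac / eta)
    (hmid : ∀ i, 1 ≤ i → i ≤ m - 1 → v i * (1 - ξ (i + 1)) - ξ i * v (i + 1) = 1)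
    (hvm : v m = 1) (hlast : v (m + 1) = Mbar * etac / delta) :
    (flowJacobian m Mbar eta etac delta ξ *ᵥ fun j => v j.val) = 0 := by
  funext i
  obtain hi | hi | hi | hi | ⟨h2, him⟩ :
      i.val = 0 ∨ i.val = 1 ∨ i.val = m ∨ i.val = m + 1 ∨ (2 ≤ i.val ∧ i.val < m) := by omega
  · rw [flowJacobian_mulVec_of_val_eq_zero ξ v i hm hi, hvm, Pi.zero_apply]
    field_simp at h₀
    linear_combination (-Mbar) * h₀
  · rw [flowJacobian_mulVec_of_val_eq_one ξ v i (by omega) hi, Pi.zero_apply]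
    field_simp at h₀
    linear_combination h₀ - etac * hmid 1 le_rfl (by omega)
  · have hprev := hmid (m - 1) (by omega) le_rfl
    rw [Nat.sub_add_cancel (by omega)] at hprev
    rw [flowJacobian_mulVec_of_val_eq_self ξ v i hm hi, Pi.zero_apply]
    rw [hvm] at hprev ⊢
    linear_combination etac * hprev
  · rw [flowJacobian_mulVec_of_val_eq_succ ξ v i hm hi, hvm, hlast, Pi.zero_apply]
    field_simp
    ring
  · have hprev := hmid (i - 1) (by omega) (by omega)
    rw [Nat.sub_add_cancel (by omega)] at hprev
    rw [flowJacobian_mulVec_of_two_le_of_lt ξ v i h2 him, Pi.zero_apply]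
    linear_combination etac * hprev - etac * hmid i (by omega) (by omega)

section Derivatives

variable {f g : ℝ → ℝ} {f' g' c l : ℝ} {U : Set ℝ}

lemma HasDerivAt.eq_of_eqOn_const_mul (hU : U ∈ 𝓝 l) (hf : HasDerivAt f f' l)
    (h : ∀ t ∈ U, f t = c * t) : f' = c := by
  have hlin : HasDerivAt (fun t => c * t) c l := by
    simpa using (hasDerivAt_id l).const_mul c
  exact hf.unique (hlin.congr_of_eventuallyEq (eventually_of_mem hU h))

lemma HasDerivAt.mul_one_sub_eq_of_eqOn_const_mul (hU : U ∈ 𝓝 l) (hf : HasDerivAt f f' l)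
    (hg : HasDerivAt g g' l) (h : ∀ t ∈ U, f t * (1 - g t) = c * t) :
    f' * (1 - g l) - f l * g' = c := by
  have hprod : HasDerivAt (fun t => f t * (1 - g t)) (f' * (1 - g l) + f l * (0 - g')) l :=
    hf.mul ((hasDerivAt_const l 1).sub hg)
  rw [← hprod.eq_of_eqOn_const_mul hU h]
  ring

end Derivatives

theorem Psi_l_in_kernel_general
    (m : ℕ) (hm : 2 ≤ m) (Mbar eta etac delta : ℝ)
    (heta : 0 < eta) (hdelta : 0 < delta)
    (lbar : ℝ)
    (ξ ξ' : ℕ → ℝ → ℝ)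
    (hξm : ∀ l ∈ Set.Ioo 0 lbar, ξ m l = l)
    (hξmid : ∀ i, 1 ≤ i → i ≤ m - 1 → ∀ l ∈ Set.Ioo 0 lbar,
      ξ i l = l / (1 - ξ (i + 1) l))
    (hξ0 : ∀ l ∈ Set.Ioo 0 lbar, ξ 0 l = etac * l / (eta * (1 - ξ 1 l)))
    (hξlast : ∀ l ∈ Set.Ioo 0 lbar, ξ (m + 1) l = Mbar * etac / delta * l)
    (hbound : ∀ i, 1 ≤ i → i ≤ m → ∀ l ∈ Set.Ioo 0 lbar, ξ i l ∈ Set.Ioo (0 : ℝ) 1)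
    (hderiv : ∀ i, i ≤ m + 1 → ∀ l ∈ Set.Ioo 0 lbar, HasDerivAt (ξ i) (ξ' i l) l) :
    ∀ l ∈ Set.Ioo 0 lbar,
      (flowJacobian m Mbar eta etac delta (fun i => ξ i l)).mulVec
        (fun j : Fin (m + 2) => ξ' j.val l) = 0 := by
  intro l hl
  have hU : Set.Ioo 0 lbar ∈ 𝓝 l := isOpen_Ioo.mem_nhds hl
  have hne : ∀ i, 1 ≤ i → i ≤ m → ∀ t ∈ Set.Ioo 0 lbar, 1 - ξ i t ≠ 0 := fun i h1 h2 t ht =>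
    sub_ne_zero.2 (hbound i h1 h2 t ht).2.ne'
  have hd : ∀ i, i ≤ m + 1 → HasDerivAt (ξ i) (ξ' i l) l := fun i hi => hderiv i hi l hl
  apply flowJacobian_mulVec_eq_zero hm heta.ne' hdelta.ne' (fun i => ξ i l) (fun i => ξ' i l)
  · refine (hd 0 (by omega)).mul_one_sub_eq_of_eqOn_const_mul hU (hd 1 (by omega))
      fun t ht => ?_
    have := hne 1 le_rfl (by omega) t ht
    rw [hξ0 t ht]
    field_simp
  · intro i h1 h2
    refine (hd i (by omega)).mul_one_sub_eq_of_eqOn_const_mul hU (hd (i + 1) (by omega))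
      fun t ht => ?_
    have := hne (i + 1) (by omega) (by omega) t ht
    rw [hξmid i h1 h2 t ht, one_mul]
    field_simp
  · exact (hd m (by omega)).eq_of_eqOn_const_mul hU fun t ht => by rw [hξm t ht, one_mul]
  · exact (hd (m + 1) le_rfl).eq_of_eqOn_const_mul hU hξlast

/-- The tangent vector `Ψ_l = (0, …, 0, ∂ξ₀/∂l, …, ∂ξ_{m+1}/∂l)`
lies in the kernel of the Jacobian of the combined model, i.e.
`J_{f₂}^z · (∂ξ/∂l) = 0`, where `ξ` satisfies the same recursion as `γ` with
parameters `(η, η_c, M̄, δ)` in place of `(λ, λ_c, G, ν)`. -/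
theorem Psi_l_in_kernel
    (m : ℕ) (hm : 2 ≤ m) (Mbar eta etac delta : ℝ)
    (hM : 0 < Mbar) (heta : 0 < eta) (hetac : 0 < etac) (hdelta : 0 < delta)
    (lbar : ℝ) (hlbar : 0 < lbar)
    (ξ ξ' : ℕ → ℝ → ℝ)
    (hξm : ∀ l ∈ Set.Ioo 0 lbar, ξ m l = l)
    (hξmid : ∀ i, 1 ≤ i → i ≤ m - 1 → ∀ l ∈ Set.Ioo 0 lbar,
      ξ i l = l / (1 - ξ (i + 1) l))
    (hξ0 : ∀ l ∈ Set.Ioo 0 lbar, ξ 0 l = etac * l / (eta * (1 - ξ 1 l)))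
    (hξlast : ∀ l ∈ Set.Ioo 0 lbar, ξ (m + 1) l = Mbar * etac / delta * l)
    (hbound : ∀ i, 1 ≤ i → i ≤ m → ∀ l ∈ Set.Ioo 0 lbar, ξ i l ∈ Set.Ioo (0 : ℝ) 1)
    (hderiv : ∀ i, i ≤ m + 1 → ∀ l ∈ Set.Ioo 0 lbar, HasDerivAt (ξ i) (ξ' i l) l) :
    ∀ l ∈ Set.Ioo 0 lbar,
      (flowJacobian m Mbar eta etac delta (fun i => ξ i l)).mulVec
        (fun j : Fin (m + 2) => ξ' j.val l) = 0 :=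
  Psi_l_in_kernel_general m hm Mbar eta etac delta heta hdelta lbar ξ ξ' hξm hξmid hξ0 hξlast hbound
    hderiv
end
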